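/- arXiv:2008.04173 — 10 statements merged into one kernel-verified Lean document; each statement's English description precedes it below -/
import Mathlib

section
/- Let P be a finite, reduced, crystallographic, irreducible root pairing (root system) over ℝ equipped with a base (set of simple roots) {α_i}_{i∈S}. Suppose θ is a root that is dominant (⟨θ, α_i^∨⟩ ≥ 0 for every simple coroot α_i^∨) and is minimal among dominant roots, in the sense that for every dominant root γ the difference γ − θ is a nonnegative integer combination of the simple roots (so θ is the short highest root). If λ is a nonzero dominant element of the root lattice that is a nonnegative integer combination of the simple roots, then λ − θ is again a nonnegative integer combination of the simple roots. -/
/-!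
Write `λ - α ≥ 0` when `λ - α` is a nonnegative integer combination of simple roots. Start from a
simple root `α_k` with `λ - α_k ≥ 0` and climb through positive roots `α ≤ λ`. If `α` is not
dominant, pick a simple `α_k` with `⟨α, α_k^∨⟩ < 0`. Then `⟨λ - α, α_k^∨⟩ > 0`, and since the
off-diagonal Cartan entries are `≤ 0` this forces `α_k` to occur in `λ - α`; moreover `α + α_k`
is a root. The height of `λ - α` drops at each step, so we reach a dominant root `α ≤ λ`, and
then `θ ≤ α` by minimality of `θ`.
-/

open Finset

section NatCombination

variable {ι M : Type*} [AddCommGroup M] [Module ℝ M] {S : Finset ι} {k : ι} {v : ι → M}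

section

variable [DecidableEq ι] (v)

lemma sum_natCast_smul_single (hk : k ∈ S) :
    ∑ i ∈ S, ((Pi.single k 1 : ι → ℕ) i : ℝ) • v i = v k := by
  simp [Pi.single_apply, hk]

lemma sum_natCast_smul_add_single (c : ι → ℕ) (hk : k ∈ S) :
    ∑ i ∈ S, ((c + Pi.single k 1 : ι → ℕ) i : ℝ) • v i = ∑ i ∈ S, (c i : ℝ) • v i + v k := by
  simp only [Pi.add_apply, Nat.cast_add, add_smul, sum_add_distrib, sum_natCast_smul_single v hk]

lemma sum_natCast_smul_sub_single {c : ι → ℕ} (hc : 1 ≤ c k) (hk : k ∈ S) :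
    ∑ i ∈ S, ((c - Pi.single k 1 : ι → ℕ) i : ℝ) • v i = ∑ i ∈ S, (c i : ℝ) • v i - v k := by
  have hc' : c - Pi.single k 1 + Pi.single k 1 = c := by
    ext i
    rcases eq_or_ne i k with rfl | hi <;> simp [*]
  rw [eq_sub_iff_add_eq, ← sum_natCast_smul_add_single v _ hk, hc']

end

lemma sum_natCast_smul_ne_neg (hv : LinearIndepOn ℝ v S) (c : ι → ℕ) (hk : k ∈ S) :
    ∑ i ∈ S, (c i : ℝ) • v i ≠ -v k := by
  classical
  intro h
  have hcoeff := linearIndepOn_finset_iff.mp hv (fun i => ((c + Pi.single k 1 : ι → ℕ) i : ℝ))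
    (by rw [sum_natCast_smul_add_single v c hk, h, neg_add_cancel]) k hk
  norm_cast at hcoeff
  simp at hcoeff

lemma sub_ne_sum_natCast_smul (hv : LinearIndepOn ℝ v S) {i : ι} (hi : i ∈ S) (hk : k ∈ S)
    (hik : i ≠ k) (c : ι → ℕ) : v i - v k ≠ ∑ j ∈ S, (c j : ℝ) • v j := by
  classical
  intro h
  have hcoeff := linearIndepOn_finset_iffₛ.mp hv (fun j => ((Pi.single i 1 : ι → ℕ) j : ℝ))
    (fun j => ((c + Pi.single k 1 : ι → ℕ) j : ℝ))
    (by rw [sum_natCast_smul_single v hi, sum_natCast_smul_add_single v c hk, ← h, sub_add_cancel])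
    k hk
  norm_cast at hcoeff
  simp [hik.symm] at hcoeff

end NatCombination

namespace RootPairing

variable {ι M N : Type*} [AddCommGroup M] [Module ℝ M] [AddCommGroup N] [Module ℝ N]
  {P : RootPairing ι ℝ M N} {S : Finset ι}

lemma pairing_nonpos_of_base [Finite ι] [P.IsCrystallographic]
    (hind : LinearIndepOn ℝ P.root S)
    (hbase : ∀ j : ι, (∃ c : ι → ℕ, P.root j = ∑ i ∈ S, (c i : ℝ) • P.root i) ∨
      (∃ c : ι → ℕ, P.root j = -∑ i ∈ S, (c i : ℝ) • P.root i))
    {i k : ι} (hi : i ∈ S) (hk : k ∈ S) (hik : i ≠ k) : P.pairing i k ≤ 0 := by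
  -- otherwise `α_i - α_k` is a root whose coefficients have both signs
  by_contra! hpos
  rw [← P.algebraMap_pairingIn ℤ] at hpos
  obtain ⟨m, hm⟩ := P.root_sub_root_mem_of_pairingIn_pos (by simpa using hpos) hik
  rcases hbase m with ⟨c, hc⟩ | ⟨c, hc⟩
  · exact sub_ne_sum_natCast_smul hind hi hk hik c (hm.symm.trans hc)
  · exact sub_ne_sum_natCast_smul hind hk hi hik.symm c (by rw [← neg_sub, ← hm, hc, neg_neg])

lemma one_le_coeff_of_pairing_pos (hS : ∀ i ∈ S, ∀ k ∈ S, i ≠ k → P.pairing i k ≤ 0)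
    {c : ι → ℕ} {k : ι} (hk : k ∈ S)
    (h : 0 < P.toLinearMap (∑ i ∈ S, (c i : ℝ) • P.root i) (P.coroot k)) : 1 ≤ c k := by
  by_contra! hck
  simp only [map_sum, map_smul, LinearMap.sum_apply, LinearMap.smul_apply, smul_eq_mul,
    root_coroot_eq_pairing] at h
  refine h.not_ge (sum_nonpos fun i hi => ?_)
  rcases eq_or_ne i k with rfl | hik
  · simp [Nat.lt_one_iff.mp hck]
  · exact mul_nonpos_of_nonneg_of_nonpos (Nat.cast_nonneg _) (hS i hi k hk hik)

lemma exists_sub_root_eq_sum_of_sub_root_eq_sum [Finite ι] [P.IsCrystallographic]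
    (hind : LinearIndepOn ℝ P.root S) (hS : ∀ i ∈ S, ∀ k ∈ S, i ≠ k → P.pairing i k ≤ 0)
    {iθ : ι} (hθ : ∀ j : ι, (∀ i ∈ S, 0 ≤ P.pairing j i) →
      ∃ c : ι → ℕ, P.root j - P.root iθ = ∑ i ∈ S, (c i : ℝ) • P.root i)
    {lam : M} (hlam : ∀ i ∈ S, 0 ≤ P.toLinearMap lam (P.coroot i))
    (c e : ι → ℕ) (j : ι) (he : P.root j = ∑ i ∈ S, (e i : ℝ) • P.root i)
    (hc : lam - P.root j = ∑ i ∈ S, (c i : ℝ) • P.root i) :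
    ∃ d : ι → ℕ, lam - P.root iθ = ∑ i ∈ S, (d i : ℝ) • P.root i := by
  classical
  induction hn : ∑ i ∈ S, c i using Nat.strong_induction_on generalizing c e j with
  | _ n ih =>
  by_cases hdom : ∀ k ∈ S, 0 ≤ P.pairing j k
  · obtain ⟨d, hd⟩ := hθ j hdom
    refine ⟨c + d, ?_⟩
    simp only [Pi.add_apply, Nat.cast_add, add_smul, sum_add_distrib, ← hc, ← hd]
    abel
  push Not at hdom
  obtain ⟨k, hk, hjk⟩ := hdom
  have hck : 1 ≤ c k := one_le_coeff_of_pairing_pos hS hk <| by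
    rw [← hc, map_sub, LinearMap.sub_apply, root_coroot_eq_pairing]
    linarith [hlam k hk]
  obtain ⟨j', hj'⟩ := P.root_add_root_mem_of_pairingIn_neg (i := j) (j := k)
    (by rw [← P.algebraMap_pairingIn ℤ] at hjk; simpa using hjk)
    (he ▸ sum_natCast_smul_ne_neg hind e hk)
  refine ih _ ?_ (c - Pi.single k 1) (e + Pi.single k 1) j' ?_ ?_ rfl
  · rw [← hn]
    exact sum_lt_sum (fun i _ => Nat.sub_le _ _)
      ⟨k, hk, by rw [Pi.sub_apply, Pi.single_eq_same]; omega⟩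
  · rw [sum_natCast_smul_add_single _ _ hk, ← he, hj']
  · rw [sum_natCast_smul_sub_single _ hck hk, ← hc, hj']
    abel

end RootPairing

theorem stmt_0_general {ι M N : Type*} [Fintype ι]
    [AddCommGroup M] [Module ℝ M] [AddCommGroup N] [Module ℝ N]
    (P : RootPairing ι ℝ M N)
    (hcrys : P.IsCrystallographic)
    (S : Finset ι)
    (hbaseInd : LinearIndependent ℝ fun i : S => P.root i)
    (hbase : ∀ j : ι, (∃ c : ι → ℕ, P.root j = ∑ i ∈ S, (c i : ℝ) • P.root i) ∨
      (∃ c : ι → ℕ, P.root j = -∑ i ∈ S, (c i : ℝ) • P.root i))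
    (iθ : ι)
    (hθmin : ∀ j : ι, (∀ i ∈ S, 0 ≤ P.pairing j i) →
      ∃ c : ι → ℕ, P.root j - P.root iθ = ∑ i ∈ S, (c i : ℝ) • P.root i)
    (lam : M) (hlam0 : lam ≠ 0)
    (hlamdom : ∀ i ∈ S, 0 ≤ P.toLinearMap lam (P.coroot i))
    (hlamsum : ∃ c : ι → ℕ, lam = ∑ i ∈ S, (c i : ℝ) • P.root i) :
    ∃ c : ι → ℕ, lam - P.root iθ = ∑ i ∈ S, (c i : ℝ) • P.root i := by
  classical
  obtain ⟨c, rfl⟩ := hlamsum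
  obtain ⟨k, hk, hck⟩ : ∃ k ∈ S, 1 ≤ c k := by
    by_contra! h
    exact hlam0 (sum_eq_zero fun i hi => by simp [Nat.lt_one_iff.mp (h i hi)])
  exact RootPairing.exists_sub_root_eq_sum_of_sub_root_eq_sum hbaseInd
    (fun i hi k hk hik => RootPairing.pairing_nonpos_of_base hbaseInd hbase hi hk hik) hθmin
    hlamdom (c - Pi.single k 1) (Pi.single k 1) k (sum_natCast_smul_single _ hk).symm
    (sum_natCast_smul_sub_single _ hck hk).symm

/-- Stembridge, Proposition 2.1: let `P` be a finite, reduced,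
crystallographic, irreducible root pairing over `ℝ` with a base indexed by `S`
(linearly independent, and every root is a nonnegative or nonpositive integer
combination of the simple roots). Let `θ = P.root iθ` be a dominant root that is
minimal among dominant roots (every dominant root exceeds it by a nonnegative
integer combination of simple roots, so `θ` is the short highest root). If `λ ≠ 0`
is dominant and a nonnegative integer combination of the simple roots, then so is
`λ - θ`. -/
theorem stmt_0 {ι M N : Type*} [Fintype ι]
    [AddCommGroup M] [Module ℝ M] [AddCommGroup N] [Module ℝ N]
    (P : RootPairing ι ℝ M N)
    (hcrys : P.IsCrystallographic)
    (hred : P.IsReduced)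
    (hirr : ¬∃ s t : Set ι, s.Nonempty ∧ t.Nonempty ∧ s ∩ t = ∅ ∧ s ∪ t = Set.univ ∧
      ∀ i ∈ s, ∀ j ∈ t, P.pairing i j = 0)
    (S : Finset ι)
    (hbaseInd : LinearIndependent ℝ fun i : S => P.root i)
    (hbase : ∀ j : ι, (∃ c : ι → ℕ, P.root j = ∑ i ∈ S, (c i : ℝ) • P.root i) ∨
      (∃ c : ι → ℕ, P.root j = -∑ i ∈ S, (c i : ℝ) • P.root i))
    (iθ : ι)
    (hθdom : ∀ i ∈ S, 0 ≤ P.pairing iθ i)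
    (hθmin : ∀ j : ι, (∀ i ∈ S, 0 ≤ P.pairing j i) →
      ∃ c : ι → ℕ, P.root j - P.root iθ = ∑ i ∈ S, (c i : ℝ) • P.root i)
    (lam : M) (hlam0 : lam ≠ 0)
    (hlamdom : ∀ i ∈ S, 0 ≤ P.toLinearMap lam (P.coroot i))
    (hlamsum : ∃ c : ι → ℕ, lam = ∑ i ∈ S, (c i : ℝ) • P.root i) :
    ∃ c : ι → ℕ, lam - P.root iθ = ∑ i ∈ S, (c i : ℝ) • P.root i :=
  stmt_0_general P hcrys S hbaseInd hbase iθ hθmin lam hlam0 hlamdom hlamsum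
end

section
/- Let N ≥ 1 and let A be an N×N integer matrix that is a generalized Cartan matrix (A_{ii} = 2 for all i; A_{ij} ≤ 0 for all i ≠ j; and A_{ij} = 0 if and only if A_{ji} = 0) and indecomposable (there is no partition of the index set into two nonempty subsets I and J with A_{ij} = 0 for all i ∈ I and j ∈ J). Suppose δ ∈ ℤ^N has all entries strictly positive and Aδ = 0. Then every m ∈ ℤ^N satisfying (Am)_i ≥ 0 for all i satisfies Am = 0, and moreover m is a rational multiple of δ. -/
/-!
Rescale `m` to `v = m - q δ`, where `q` is the least ratio `m i / δ i`. Then `v ≥ 0`,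
`A v = A m ≥ 0` and `v` vanishes somewhere. In a row `i` with `v i = 0` the only
nonnegative contribution to `(A v) i` disappears, so every neighbour `j` of `i`
(`A i j ≠ 0`) has `v j = 0` as well; by indecomposability `v = 0`, i.e. `m = q δ`,
and then `A m = q A δ = 0`.
-/

namespace Matrix

variable {ι R : Type*}

def IsIndecomposable [Zero R] (B : Matrix ι ι R) : Prop :=
  ¬∃ I J : Set ι, I.Nonempty ∧ J.Nonempty ∧ I ∩ J = ∅ ∧ I ∪ J = Set.univ ∧
    ∀ i ∈ I, ∀ j ∈ J, B i j = 0

theorem IsIndecomposable.map {S : Type*} [Zero R] [Zero S] {B : Matrix ι ι R}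
    (hB : B.IsIndecomposable) {f : R → S} (hf : ∀ a, f a = 0 → a = 0) :
    (B.map f).IsIndecomposable := by
  rintro ⟨I, J, hI, hJ, hdisj, hcover, hzero⟩
  exact hB ⟨I, J, hI, hJ, hdisj, hcover, fun i hi j hj => hf _ (hzero i hi j hj)⟩

theorem IsIndecomposable.eq_univ [Zero R] {B : Matrix ι ι R} (hB : B.IsIndecomposable)
    {S : Set ι} (hS : S.Nonempty) (hclosed : ∀ i ∈ S, ∀ j, B i j ≠ 0 → j ∈ S) :
    S = Set.univ := by
  by_contra hne
  refine hB ⟨S, Sᶜ, hS, Set.nonempty_compl.mpr hne, Set.inter_compl_self S,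
    Set.union_compl_self S, fun i hi j hj => ?_⟩
  by_contra hij
  exact hj (hclosed i hi j hij)

variable [Fintype ι] [Ring R] [LinearOrder R] [IsStrictOrderedRing R]

theorem apply_eq_zero_of_mulVec_nonneg {B : Matrix ι ι R} (hoff : ∀ i j, i ≠ j → B i j ≤ 0)
    {v : ι → R} (hv : 0 ≤ v) (hBv : 0 ≤ B *ᵥ v) {i j : ι} (hi : v i = 0) (hij : B i j ≠ 0) :
    v j = 0 := by
  have hterm : ∀ k ∈ Finset.univ, B i k * v k ≤ 0 := by
    intro k _
    rcases eq_or_ne i k with rfl | hik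
    · simp [hi]
    · exact mul_nonpos_of_nonpos_of_nonneg (hoff i k hik) (hv k)
  have hsum : ∑ k, B i k * v k = 0 :=
    le_antisymm (Finset.sum_nonpos hterm) (hBv i)
  have hj := (Finset.sum_eq_zero_iff_of_nonpos hterm).mp hsum j (Finset.mem_univ j)
  exact (mul_eq_zero.mp hj).resolve_left hij

theorem IsIndecomposable.eq_zero_of_mulVec_nonneg {B : Matrix ι ι R}
    (hB : B.IsIndecomposable) (hoff : ∀ i j, i ≠ j → B i j ≤ 0)
    {v : ι → R} (hv : 0 ≤ v) (hBv : 0 ≤ B *ᵥ v) {i₀ : ι} (hi₀ : v i₀ = 0) : v = 0 := by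
  have hzeros : {i | v i = 0} = Set.univ :=
    hB.eq_univ ⟨i₀, hi₀⟩ fun _ hi _ hij => apply_eq_zero_of_mulVec_nonneg hoff hv hBv hi hij
  funext i
  exact Set.eq_univ_iff_forall.mp hzeros i

theorem IsIndecomposable.exists_eq_smul_of_mulVec_nonneg {K : Type*} [Field K] [LinearOrder K]
    [IsStrictOrderedRing K] {A : Matrix ι ι K} (hA : A.IsIndecomposable)
    (hoff : ∀ i j, i ≠ j → A i j ≤ 0) {δ : ι → K} (hδpos : ∀ i, 0 < δ i) (hδ : A *ᵥ δ = 0)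
    {m : ι → K} (hm : 0 ≤ A *ᵥ m) : ∃ q : K, m = q • δ := by
  cases isEmpty_or_nonempty ι
  · exact ⟨0, Subsingleton.elim _ _⟩
  obtain ⟨i₀, hi₀⟩ := Finite.exists_min fun i => m i / δ i
  refine ⟨m i₀ / δ i₀, sub_eq_zero.mp (hA.eq_zero_of_mulVec_nonneg hoff (i₀ := i₀) ?_ ?_ ?_)⟩
  · intro i
    simpa [sub_nonneg] using (le_div_iff₀ (hδpos i)).mp (hi₀ i)
  · rwa [mulVec_sub, mulVec_smul, hδ, smul_zero, sub_zero]
  · simp [div_mul_cancel₀ _ (hδpos i₀).ne']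

end Matrix

theorem stmt_1_general (N : ℕ) (A : Matrix (Fin N) (Fin N) ℤ)
    (hoff : ∀ i j, i ≠ j → A i j ≤ 0)
    (hind : ¬∃ I J : Set (Fin N), I.Nonempty ∧ J.Nonempty ∧ I ∩ J = ∅ ∧
      I ∪ J = Set.univ ∧ ∀ i ∈ I, ∀ j ∈ J, A i j = 0)
    (δ : Fin N → ℤ) (hδpos : ∀ i, 0 < δ i) (hδ : A.mulVec δ = 0)
    (m : Fin N → ℤ) (hm : ∀ i, 0 ≤ A.mulVec m i) :
    A.mulVec m = 0 ∧ ∃ q : ℚ, ∀ i, (m i : ℚ) = q * (δ i : ℚ) := by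
  set Aℚ : Matrix (Fin N) (Fin N) ℚ := A.map (↑)
  have hcast (v : Fin N → ℤ) (i : Fin N) :
      Aℚ.mulVec (fun k => (v k : ℚ)) i = (A.mulVec v i : ℚ) :=
    (RingHom.map_mulVec (Int.castRingHom ℚ) A v i).symm
  have hδℚ : Aℚ.mulVec (fun k => (δ k : ℚ)) = 0 := funext fun i => by
    rw [hcast, hδ, Pi.zero_apply, Pi.zero_apply, Int.cast_zero]
  have hAℚ : Aℚ.IsIndecomposable := Matrix.IsIndecomposable.map hind fun _ => Int.cast_eq_zero.mp
  obtain ⟨q, hq⟩ := hAℚ.exists_eq_smul_of_mulVec_nonneg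
    (fun i j hij => Int.cast_nonpos.mpr (hoff i j hij)) (fun i => Int.cast_pos.mpr (hδpos i))
    hδℚ (m := fun k => (m k : ℚ)) fun i => (hcast m i).symm ▸ Int.cast_nonneg (hm i)
  refine ⟨funext fun i => ?_, q, fun i => congrFun hq i⟩
  have hAm : Aℚ.mulVec (fun k => (m k : ℚ)) = 0 := by
    rw [hq, Matrix.mulVec_smul, hδℚ, smul_zero]
  exact Int.cast_eq_zero.mp ((hcast m i).symm.trans (congrFun hAm i))

/-- let `A` be an indecomposable generalized Cartan matrix admitting a
strictly positive integer null vector `δ` (so `A` is of affine type). Then every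
`m ∈ ℤ^N` with `Am ≥ 0` componentwise satisfies `Am = 0`, and `m` is a rational
multiple of `δ`. -/
theorem stmt_1 (N : ℕ) (hN : 1 ≤ N) (A : Matrix (Fin N) (Fin N) ℤ)
    (hdiag : ∀ i, A i i = 2)
    (hoff : ∀ i j, i ≠ j → A i j ≤ 0)
    (hzero : ∀ i j, A i j = 0 ↔ A j i = 0)
    (hind : ¬∃ I J : Set (Fin N), I.Nonempty ∧ J.Nonempty ∧ I ∩ J = ∅ ∧
      I ∪ J = Set.univ ∧ ∀ i ∈ I, ∀ j ∈ J, A i j = 0)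
    (δ : Fin N → ℤ) (hδpos : ∀ i, 0 < δ i) (hδ : A.mulVec δ = 0)
    (m : Fin N → ℤ) (hm : ∀ i, 0 ≤ A.mulVec m i) :
    A.mulVec m = 0 ∧ ∃ q : ℚ, ∀ i, (m i : ℚ) = q * (δ i : ℚ) :=
  stmt_1_general N A hoff hind δ hδpos hδ m hm
end

section
/- If x ∈ ℤ^{n+1} satisfies (Ax)_j ≥ 0 for all j ∈ ℤ/(n+1)ℤ, then x is a constant vector, i.e. x = k·𝟙 for some integer k. -/
/-- Cartan matrix of affine type `A_n^{(1)}`, indexed by `ℤ/(n+1)ℤ`: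
`A i i = 2`, `A i j = -1` if `j ≡ i ± 1`, and `0` otherwise. -/
def cartanA (n : ℕ) : Matrix (ZMod (n + 1)) (ZMod (n + 1)) ℤ :=
  Matrix.of fun i j => if i = j then 2 else if j = i + 1 ∨ j = i - 1 then -1 else 0

/-- Value of the level-`m` weight `m·ω₀ + Σᵢ xᵢ·αᵢ` on the coroot `αⱼ^∨`. -/
def vA (n : ℕ) (m : ℤ) (x : ZMod (n + 1) → ℤ) (j : ZMod (n + 1)) : ℤ :=
  m * (if j = 0 then 1 else 0) + (cartanA n).mulVec x j

/-- Dominance of the coefficient vector `x`. -/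
def DomA (n : ℕ) (m : ℤ) (x : ZMod (n + 1) → ℤ) : Prop :=
  ∀ j, 0 ≤ vA n m x j

/-- `y` covers `x` in the componentwise (dominance) order on dominant vectors:
both are dominant, `x < y`, and no dominant `z` lies strictly between them. -/
def CoversA (n : ℕ) (m : ℤ) (x y : ZMod (n + 1) → ℤ) : Prop :=
  DomA n m x ∧ DomA n m y ∧ x < y ∧ ¬∃ z, DomA n m z ∧ x < z ∧ z < y

/-- The `(n+1)`-cycle graph on `ℤ/(n+1)ℤ` (`j` adjacent to `j ± 1`). -/
def cycleG (n : ℕ) : SimpleGraph (ZMod (n + 1)) :=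
  SimpleGraph.fromRel fun i j => j = i + 1

/-- An arc: a nonempty proper subset of `ℤ/(n+1)ℤ` whose induced subgraph in the
`(n+1)`-cycle is connected. -/
def IsArc (n : ℕ) (K : Set (ZMod (n + 1))) : Prop :=
  K.Nonempty ∧ K ≠ Set.univ ∧ ((cycleG n).induce K).Connected

/-- Indicator vector `χ_K` of a subset `K`, encoding the highest root `α_K`. -/
noncomputable def chi (n : ℕ) (K : Set (ZMod (n + 1))) : ZMod (n + 1) → ℤ :=
  K.indicator 1

/-- The `i`-th standard basis vector, encoding the simple root `αᵢ`. -/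
def eA (n : ℕ) (i : ZMod (n + 1)) : ZMod (n + 1) → ℤ :=
  fun j => if j = i then 1 else 0

lemma aux_two_ne (n : ℕ) (hn : 2 ≤ n) : (2 : ZMod (n + 1)) ≠ 0 := by
  have : ((2 : ℕ) : ZMod (n + 1)) ≠ 0 := by
    rw [Ne, ZMod.natCast_eq_zero_iff]
    intro hd; have := Nat.le_of_dvd (by norm_num) hd; omega
  simpa using this

lemma aux_one_ne (n : ℕ) (hn : 2 ≤ n) : (1 : ZMod (n + 1)) ≠ 0 := by
  have : ((1 : ℕ) : ZMod (n + 1)) ≠ 0 := by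
    rw [Ne, ZMod.natCast_eq_zero_iff]
    intro hd; have := Nat.le_of_dvd (by norm_num) hd; omega
  simpa using this

lemma mulVec_cartanA (n : ℕ) (hn : 2 ≤ n) (x : ZMod (n + 1) → ℤ) (j : ZMod (n + 1)) :
    (cartanA n).mulVec x j = 2 * x j - x (j + 1) - x (j - 1) := by
  have h1 : j + 1 ≠ j := by
    intro hh; apply aux_one_ne n hn; linear_combination hh
  have h2 : j - 1 ≠ j := by
    intro hh; apply aux_one_ne n hn; linear_combination -hh
  have h3 : j + 1 ≠ j - 1 := by
    intro hh; apply aux_two_ne n hn; linear_combination hh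
  have key : ∀ i : ZMod (n + 1),
      (cartanA n) j i * x i =
        (if i = j then 2 * x j else 0) +
        ((if i = j + 1 then -x (j + 1) else 0) + (if i = j - 1 then -x (j - 1) else 0)) := by
    intro i
    simp only [cartanA, Matrix.of_apply]
    by_cases hij : i = j
    · subst hij
      rw [if_pos rfl, if_pos rfl, if_neg h1.symm, if_neg h2.symm]
      ring
    · rw [if_neg (fun hh => hij hh.symm), if_neg hij]
      by_cases hp : i = j + 1
      · subst hp
        rw [if_pos (Or.inl rfl), if_pos rfl, if_neg h3]
        ring
      · rw [if_neg hp]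
        by_cases hm : i = j - 1
        · subst hm
          rw [if_pos (Or.inr rfl), if_pos rfl]
          ring
        · rw [if_neg (by rintro (hh | hh); exacts [hp hh, hm hh]), if_neg hm]
          ring
  rw [Matrix.mulVec, dotProduct]
  rw [Finset.sum_congr rfl (fun i _ => key i)]
  rw [Finset.sum_add_distrib, Finset.sum_add_distrib,
    Finset.sum_ite_eq' Finset.univ j, Finset.sum_ite_eq' Finset.univ (j + 1),
    Finset.sum_ite_eq' Finset.univ (j - 1)]
  simp only [Finset.mem_univ, if_true]
  ring

/-- If `x ∈ ℤ^{n+1}` satisfies `(Ax)ⱼ ≥ 0` for all `j`, then `x` is a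
constant vector `k·𝟙`. -/
theorem stmt_2 (n : ℕ) (hn : 2 ≤ n) (x : ZMod (n + 1) → ℤ)
    (h : ∀ j, 0 ≤ (cartanA n).mulVec x j) :
    ∃ k : ℤ, x = fun _ => k := by
  have e1 : ∑ j, x (j + 1) = ∑ j, x j :=
    Fintype.sum_equiv (Equiv.addRight 1) _ _ (fun j => rfl)
  have e2 : ∑ j, x (j - 1) = ∑ j, x j :=
    Fintype.sum_equiv (Equiv.subRight 1) _ _ (fun j => rfl)
  have hsum : ∑ j, (cartanA n).mulVec x j = 0 := by
    rw [Finset.sum_congr rfl (fun j _ => mulVec_cartanA n hn x j)]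
    rw [Finset.sum_sub_distrib, Finset.sum_sub_distrib, e1, e2, ← Finset.mul_sum]
    ring
  have hzero : ∀ j, (cartanA n).mulVec x j = 0 := by
    intro j
    have := (Finset.sum_eq_zero_iff_of_nonneg (fun i _ => h i)).mp hsum
    exact this j (Finset.mem_univ j)
  have hstep : ∀ j : ZMod (n + 1), x (j + 1) - x j = x j - x (j - 1) := by
    intro j
    have := hzero j
    rw [mulVec_cartanA n hn x j] at this
    linarith
  set d : ℤ := x 1 - x 0 with hd0
  have hd : ∀ k : ℕ, x ((k : ZMod (n + 1)) + 1) - x (k : ZMod (n + 1)) = d := by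
    intro k
    induction k with
    | zero => simp [hd0]
    | succ k ih =>
      have := hstep ((k : ZMod (n + 1)) + 1)
      push_cast
      rw [this]
      simpa using ih
  have hval : ∀ k : ℕ, x (k : ZMod (n + 1)) = x 0 + k * d := by
    intro k
    induction k with
    | zero => simp
    | succ k ih =>
      have := hd k
      push_cast
      push_cast at this
      linarith
  have hdz : d = 0 := by
    have := hval (n + 1)
    rw [ZMod.natCast_self] at this
    have h0 : ((n : ℤ) + 1) * d = 0 := by push_cast at this; linarith
    rcases mul_eq_zero.mp h0 with h1 | h1
    · exfalso; omega
    · exact h1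
  refine ⟨x 0, funext fun j => ?_⟩
  have := hval j.val
  rw [ZMod.natCast_val, ZMod.cast_id] at this
  simp [hdz] at this
  exact this
end

section
/- Suppose x ∈ ℤ^{n+1} satisfies xᵀAx = 2 (so x encodes a real root of type A_n^{(1)}), and for some index i one has x_i = 0 and (Ax)_i = −2. Then x + e_i = 𝟙, i.e. the corresponding root α satisfies α + α_i = δ. -/
open Matrix

theorem Matrix.IsSymm.dotProduct_mulVec_add_single {ι R : Type*} [Fintype ι] [DecidableEq ι]
    [CommRing R] {A : Matrix ι ι R} (hA : A.IsSymm) (x : ι → R) (i : ι) :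
    (x + Pi.single i 1) ⬝ᵥ A *ᵥ (x + Pi.single i 1) = x ⬝ᵥ A *ᵥ x + 2 * (A *ᵥ x) i + A i i := by
  have hcol : x ⬝ᵥ A.col i = (A *ᵥ x) i :=
    Finset.sum_congr rfl fun j _ => by rw [col_apply, hA.apply, mul_comm]
  simp only [mulVec_add, mulVec_single_one, dotProduct_add, add_dotProduct, hcol,
    single_dotProduct, one_mul, col_apply]
  ring

theorem ZMod.apply_eq_apply_zero_of_periodic {m : ℕ} [NeZero m] {α : Type*} {f : ZMod m → α}
    (hf : Function.Periodic f 1) (j : ZMod m) : f j = f 0 := by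
  simpa using hf.nat_mul_eq j.val

theorem ZMod.natCast_ne_zero_of_pos_of_lt {m k : ℕ} (hk0 : 0 < k) (hkm : k < m) :
    (k : ZMod m) ≠ 0 := by
  rw [Ne, ZMod.natCast_eq_zero_iff]
  exact Nat.not_dvd_of_pos_of_lt hk0 hkm

theorem cartanA_isSymm (n : ℕ) : (cartanA n).IsSymm :=
  IsSymm.ext fun i j => by
    simp only [cartanA, of_apply, eq_comm (a := j), eq_sub_iff_add_eq]
    grind

theorem cartanA_apply_self (n : ℕ) (i : ZMod (n + 1)) : cartanA n i i = 2 := by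
  simp [cartanA]

theorem cartanA_mulVec_apply {n : ℕ} (hn : 2 ≤ n) (x : ZMod (n + 1) → ℤ) (i : ZMod (n + 1)) :
    (cartanA n *ᵥ x) i = 2 * x i - x (i + 1) - x (i - 1) := by
  have one_ne : (1 : ZMod (n + 1)) ≠ 0 := by
    exact_mod_cast ZMod.natCast_ne_zero_of_pos_of_lt (m := n + 1) (k := 1) one_pos (by omega)
  have two_ne : (2 : ZMod (n + 1)) ≠ 0 := by
    exact_mod_cast ZMod.natCast_ne_zero_of_pos_of_lt (m := n + 1) (k := 2) two_pos (by omega)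
  have h1 : i + 1 ≠ i := fun h => one_ne (by linear_combination h)
  have h2 : i - 1 ≠ i := fun h => one_ne (by linear_combination -h)
  have h3 : i + 1 ≠ i - 1 := fun h => two_ne (by linear_combination h)
  rw [mulVec, dotProduct, ← Finset.sum_subset (Finset.subset_univ {i, i + 1, i - 1})]
  · rw [Finset.sum_insert (by simp [h1.symm, h2.symm]), Finset.sum_insert (by simp [h3]),
      Finset.sum_singleton]
    simp only [cartanA, of_apply, ↓reduceIte, h1.symm, h2.symm, h3.symm, true_or, or_true,
      neg_mul, one_mul]
    ring
  · intro j _ hj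
    simp only [Finset.mem_insert, Finset.mem_singleton, not_or] at hj
    simp [cartanA, Ne.symm hj.1, hj.2.1, hj.2.2]

theorem dotProduct_cartanA_mulVec {n : ℕ} (hn : 2 ≤ n) (x : ZMod (n + 1) → ℤ) :
    x ⬝ᵥ cartanA n *ᵥ x = ∑ j, (x (j + 1) - x j) ^ 2 := by
  have shift (f : ZMod (n + 1) → ℤ) : ∑ j, f (j + 1) = ∑ j, f j :=
    Fintype.sum_equiv (Equiv.addRight 1) _ _ fun _ => rfl
  have hsq := shift fun j => x j ^ 2
  have hprod := shift fun j => x j * x (j - 1)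
  simp only [add_sub_cancel_right] at hprod
  simp only [dotProduct, cartanA_mulVec_apply hn, sub_sq, mul_sub, Finset.sum_add_distrib,
    Finset.sum_sub_distrib, hsq, ← hprod]
  simp only [← Finset.sum_sub_distrib, ← Finset.sum_add_distrib]
  exact Finset.sum_congr rfl fun _ _ => by ring

theorem periodic_of_dotProduct_cartanA_mulVec_eq_zero {n : ℕ} (hn : 2 ≤ n)
    {y : ZMod (n + 1) → ℤ} (hy : y ⬝ᵥ cartanA n *ᵥ y = 0) : Function.Periodic y 1 := by
  rw [dotProduct_cartanA_mulVec hn, Finset.sum_eq_zero_iff_of_nonneg fun _ _ => sq_nonneg _] at hy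
  intro j
  simpa [sub_eq_zero] using hy j (Finset.mem_univ j)

/-- If `xᵀAx = 2` (a real root of type `A_n^{(1)}`), `x_i = 0` and
`(Ax)_i = -2`, then `x + eᵢ = 𝟙`, i.e. `α + αᵢ = δ`. -/
theorem stmt_3 (n : ℕ) (hn : 2 ≤ n) (x : ZMod (n + 1) → ℤ)
    (hx : dotProduct x ((cartanA n).mulVec x) = 2)
    (i : ZMod (n + 1)) (hxi : x i = 0) (hAxi : (cartanA n).mulVec x i = -2) :
    x + eA n i = fun _ => 1 := by
  have heA : eA n i = Pi.single i 1 := by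
    ext j
    simp [eA, Pi.single_apply]
  have hnull : (x + eA n i) ⬝ᵥ cartanA n *ᵥ (x + eA n i) = 0 := by
    rw [heA, (cartanA_isSymm n).dotProduct_mulVec_add_single, hx, hAxi, cartanA_apply_self]
    norm_num
  have hper := periodic_of_dotProduct_cartanA_mulVec_eq_zero hn hnull
  funext j
  rw [ZMod.apply_eq_apply_zero_of_periodic hper j, ← ZMod.apply_eq_apply_zero_of_periodic hper i]
  simp [eA, hxi]
end

section
/- If x, y ∈ ℤ^{n+1} are both dominant, then the componentwise minimum z, defined by z_j = min(x_j, y_j) for all j, is also dominant. -/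
lemma dom_min_key (n : ℕ) (hn : 2 ≤ n) (m : ℤ) (x y : ZMod (n + 1) → ℤ)
    (hx : DomA n m x) (j : ZMod (n + 1)) (hj : min (x j) (y j) = x j) :
    0 ≤ vA n m (fun j => min (x j) (y j)) j := by
  have hxj := hx j
  rw [vA, mulVec_cartanA n hn] at hxj ⊢
  have h1 : min (x (j + 1)) (y (j + 1)) ≤ x (j + 1) := min_le_left _ _
  have h2 : min (x (j - 1)) (y (j - 1)) ≤ x (j - 1) := min_le_left _ _
  simp only [hj]
  omega

/-- The componentwise minimum of two dominant vectors is dominant. -/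
theorem stmt_4 (n : ℕ) (hn : 2 ≤ n) (m : ℤ) (hm : 1 ≤ m)
    (x y : ZMod (n + 1) → ℤ) (hx : DomA n m x) (hy : DomA n m y) :
    DomA n m fun j => min (x j) (y j) := by
  intro j
  rcases min_choice (x j) (y j) with h | h
  · exact dom_min_key n hn m x y hx j h
  · have := dom_min_key n hn m y x hy j (by rw [min_comm]; exact h)
    simpa [min_comm] using this
end

section
/- The set of dominant vectors in ℤ^{n+1}, partially ordered componentwise, is a lattice: for any dominant x and y, the componentwise minimum min(x, y) is dominant and is the greatest lower bound of x and y among dominant vectors, and there exists a dominant vector w with x ≤ w and y ≤ w such that every dominant upper bound u of x and y satisfies w ≤ u. -/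
lemma myVA_eq (n : ℕ) (hn : 2 ≤ n) (m : ℤ) (x : ZMod (n + 1) → ℤ) (j : ZMod (n + 1)) :
    vA n m x j = m * (if j = 0 then 1 else 0) + (2 * x j - x (j+1) - x (j-1)) := by
  have h1 : (1 : ZMod (n+1)) ≠ 0 := by
    have : ((1:ℕ) : ZMod (n+1)) ≠ 0 := by
      rw [Ne, ZMod.natCast_eq_zero_iff]
      intro h; have := Nat.le_of_dvd (by norm_num) h; omega
    simpa using this
  have h2 : (2 : ZMod (n+1)) ≠ 0 := by
    have : ((2:ℕ) : ZMod (n+1)) ≠ 0 := by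
      rw [Ne, ZMod.natCast_eq_zero_iff]
      intro h; have := Nat.le_of_dvd (by norm_num) h; omega
    simpa using this
  have e1 : j + 1 ≠ j := by intro h; apply h1; linear_combination h
  have e2 : j - 1 ≠ j := by intro h; apply h1; linear_combination -h
  have e3 : j + 1 ≠ j - 1 := by intro h; apply h2; linear_combination h
  have key : ∀ i, (cartanA n) j i * x i =
      (if i = j then 2 * x i else 0) + (if i = j + 1 then -x i else 0)
        + (if i = j - 1 then -x i else 0) := by
    intro i
    simp only [cartanA, Matrix.of_apply]
    by_cases hij : i = j
    · subst hij
      rw [if_pos rfl, if_pos rfl, if_neg (Ne.symm e1), if_neg (Ne.symm e2)]; ring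
    · by_cases hp : i = j + 1
      · subst hp
        rw [if_neg e1.symm, if_pos (Or.inl rfl), if_neg e1, if_pos rfl, if_neg e3]; ring
      · by_cases hq : i = j - 1
        · subst hq
          rw [if_neg e2.symm, if_pos (Or.inr rfl), if_neg e2, if_neg (Ne.symm e3),
            if_pos rfl]; ring
        · rw [if_neg (fun h => hij h.symm), if_neg (by tauto), if_neg hij, if_neg hp,
            if_neg hq]; ring
  unfold vA
  rw [Matrix.mulVec, dotProduct]
  simp only [key]
  rw [Finset.sum_add_distrib, Finset.sum_add_distrib]
  simp [Finset.sum_ite_eq']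
  ring


lemma myDomMin (n : ℕ) (hn : 2 ≤ n) (m : ℤ) (x y : ZMod (n + 1) → ℤ)
    (hx : DomA n m x) (hy : DomA n m y) : DomA n m (fun j => min (x j) (y j)) := by
  intro j
  rw [myVA_eq n hn]
  show 0 ≤ m * (if j = 0 then 1 else 0) +
    (2 * min (x j) (y j) - min (x (j+1)) (y (j+1)) - min (x (j-1)) (y (j-1)))
  have hxj := hx j; have hyj := hy j
  rw [myVA_eq n hn] at hxj hyj
  have p1 : min (x (j+1)) (y (j+1)) ≤ x (j+1) := min_le_left _ _
  have p2 : min (x (j-1)) (y (j-1)) ≤ x (j-1) := min_le_left _ _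
  have q1 : min (x (j+1)) (y (j+1)) ≤ y (j+1) := min_le_right _ _
  have q2 : min (x (j-1)) (y (j-1)) ≤ y (j-1) := min_le_right _ _
  rcases min_cases (x j) (y j) with ⟨h, _⟩ | ⟨h, _⟩ <;> rw [h] <;> linarith

/-- The set of dominant vectors, componentwise ordered, is a lattice:
the componentwise minimum of dominant `x, y` is dominant and is their greatest lower
bound among dominant vectors, and `x, y` have a least dominant upper bound. -/
theorem stmt_5 (n : ℕ) (hn : 2 ≤ n) (m : ℤ) (hm : 1 ≤ m)
    (x y : ZMod (n + 1) → ℤ) (hx : DomA n m x) (hy : DomA n m y) :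
    (DomA n m (fun j => min (x j) (y j)) ∧
      (fun j => min (x j) (y j)) ≤ x ∧ (fun j => min (x j) (y j)) ≤ y ∧
      ∀ z, DomA n m z → z ≤ x → z ≤ y → z ≤ fun j => min (x j) (y j)) ∧
    ∃ w, DomA n m w ∧ x ≤ w ∧ y ≤ w ∧
      ∀ u, DomA n m u → x ≤ u → y ≤ u → w ≤ u := by
  constructor
  · refine ⟨myDomMin n hn m x y hx hy, fun j => min_le_left _ _, fun j => min_le_right _ _,
      fun z hz hzx hzy j => le_min (hzx j) (hzy j)⟩
  · -- the set of dominant upper bounds is nonempty: a big constant vector works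
    have hne : (Finset.univ : Finset (ZMod (n+1))).Nonempty := Finset.univ_nonempty
    set C : ℤ := Finset.univ.sup' hne (fun j => max (x j) (y j)) with hC
    have hCx : ∀ j, x j ≤ C := fun j =>
      le_trans (le_max_left _ _) (Finset.le_sup' (fun j => max (x j) (y j)) (Finset.mem_univ j))
    have hCy : ∀ j, y j ≤ C := fun j =>
      le_trans (le_max_right _ _) (Finset.le_sup' (fun j => max (x j) (y j)) (Finset.mem_univ j))
    have hW0 : DomA n m (fun _ => C) := by
      intro j
      rw [myVA_eq n hn]
      show 0 ≤ m * (if j = 0 then 1 else 0) + (2 * C - C - C)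
      split <;> linarith
    -- for each coordinate, the set of values of dominant upper bounds has a least element
    have key : ∀ j : ZMod (n+1), ∃ t : ℤ,
        (∃ u, (DomA n m u ∧ x ≤ u ∧ y ≤ u) ∧ u j = t) ∧
        ∀ t', (∃ u, (DomA n m u ∧ x ≤ u ∧ y ≤ u) ∧ u j = t') → t ≤ t' := by
      intro j
      classical
      apply Int.exists_least_of_bdd (P := fun t => ∃ u, (DomA n m u ∧ x ≤ u ∧ y ≤ u) ∧ u j = t)
      · exact ⟨x j, fun t ⟨u, hu, hut⟩ => hut ▸ hu.2.1 j⟩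
      · exact ⟨C, ⟨fun _ => C, ⟨hW0, fun j => hCx j, fun j => hCy j⟩, rfl⟩⟩
    choose w hw hmin using key
    refine ⟨w, ?_, ?_, ?_, ?_⟩
    · intro j
      obtain ⟨u, hu, huj⟩ := hw j
      have hdu := hu.1 j
      rw [myVA_eq n hn] at hdu ⊢
      have l1 : w (j+1) ≤ u (j+1) := hmin (j+1) _ ⟨u, hu, rfl⟩
      have l2 : w (j-1) ≤ u (j-1) := hmin (j-1) _ ⟨u, hu, rfl⟩
      rw [← huj]
      linarith
    · intro j
      obtain ⟨u, hu, huj⟩ := hw j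
      exact huj ▸ hu.2.1 j
    · intro j
      obtain ⟨u, hu, huj⟩ := hw j
      exact huj ▸ hu.2.2 j
    · intro u hu hxu hyu j
      exact hmin j _ ⟨u, ⟨hu, hxu, hyu⟩, rfl⟩
end

section
/- Let x ∈ ℤ^{n+1} be dominant, let b ∈ ℤ^{n+1} satisfy b ≥ 0 and b ≠ 0 with x + b dominant, let I = {j : b_j ≠ 0} be the support of b, and let J = {j ∈ I : v(x)_j = 0}. Let K ⊆ I be an arc, and let b|_K denote the vector that agrees with b on K and is 0 outside K. If (A(b|_K))_i ≥ 0 for every i ∈ K \ J, and in addition v(x + χ_K)_i ≥ 0 for every i ∈ I \ K, then x + χ_K is dominant. -/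
lemma cartan_mulVec (n : ℕ) (hn : 2 ≤ n) (y : ZMod (n+1) → ℤ) (j : ZMod (n+1)) :
    (cartanA n).mulVec y j = 2 * y j - y (j+1) - y (j-1) := by
  classical
  have h1 : (1 : ZMod (n+1)) ≠ 0 := by
    have : ((1:ℕ) : ZMod (n+1)) ≠ 0 := by
      rw [Ne, ZMod.natCast_eq_zero_iff]
      intro h; have := Nat.le_of_dvd one_pos h; omega
    simpa using this
  have h2 : (2 : ZMod (n+1)) ≠ 0 := by
    have : ((2:ℕ) : ZMod (n+1)) ≠ 0 := by
      rw [Ne, ZMod.natCast_eq_zero_iff]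
      intro h; have := Nat.le_of_dvd two_pos h; omega
    simpa using this
  have e1 : (j + 1 : ZMod (n+1)) ≠ j := by
    rw [Ne, add_eq_left]; exact h1
  have e2 : (j - 1 : ZMod (n+1)) ≠ j := by
    rw [Ne, sub_eq_self]; exact h1
  have e3 : (j + 1 : ZMod (n+1)) ≠ j - 1 := by
    intro h
    apply h2
    have : j + 1 - (j - 1) = 0 := by rw [h]; ring
    calc (2 : ZMod (n+1)) = j + 1 - (j - 1) := by ring
      _ = 0 := this
  have key : ∀ i, cartanA n j i * y i =
      (if i = j then 2 * y j else 0) +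
      ((if i = j + 1 then -y (j+1) else 0) + (if i = j - 1 then -y (j-1) else 0)) := by
    intro i
    simp only [cartanA, Matrix.of_apply]
    by_cases hij : j = i
    · subst hij
      simp [Ne.symm e1, Ne.symm e2]
    · rw [if_neg hij, if_neg (Ne.symm hij)]
      by_cases h1' : i = j + 1
      · subst h1'
        simp [e3, Ne.symm hij]
      · by_cases h2' : i = j - 1
        · subst h2'
          simp [h1', Ne.symm hij]
        · simp [h1', h2', hij]
  rw [Matrix.mulVec, dotProduct]
  rw [Finset.sum_congr rfl fun i _ => key i]
  simp only [Finset.sum_add_distrib, Finset.sum_ite_eq' Finset.univ, Finset.mem_univ, if_true]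
  ring

/-- Lemma 2.5(2) in type `A_n^{(1)}`: under the hypotheses of
Statement 6, if moreover `v(x + χ_K)ᵢ ≥ 0` for every `i ∈ I \ K`, then `x + χ_K`
is dominant. -/
theorem stmt_7 (n : ℕ) (hn : 2 ≤ n) (m : ℤ) (hm : 1 ≤ m)
    (x b : ZMod (n + 1) → ℤ) (hx : DomA n m x)
    (hb : ∀ j, 0 ≤ b j) (hbne : b ≠ 0) (hxb : DomA n m (x + b))
    (K : Set (ZMod (n + 1))) (hK : IsArc n K)
    (hKI : K ⊆ {j | b j ≠ 0})
    (hmain : ∀ i ∈ K \ {j ∈ {j | b j ≠ 0} | vA n m x j = 0},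
      0 ≤ (cartanA n).mulVec (K.indicator b) i)
    (hout : ∀ i ∈ {j | b j ≠ 0} \ K, 0 ≤ vA n m (x + chi n K) i) :
    DomA n m (x + chi n K) := by
  classical
  intro j
  have hchi : ∀ i, chi n K i = if i ∈ K then 1 else 0 := by
    intro i; simp [chi, Set.indicator_apply]
  have hchi_nonneg : ∀ i, 0 ≤ chi n K i := by
    intro i; rw [hchi]; split <;> norm_num
  have hchi_le_one : ∀ i, chi n K i ≤ 1 := by
    intro i; rw [hchi]; split <;> norm_num
  have hchi_le_b : ∀ i, chi n K i ≤ b i := by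
    intro i; rw [hchi]
    split
    · next hiK =>
      have h1 : b i ≠ 0 := hKI hiK
      have h2 := hb i
      omega
    · exact hb i
  have hlin : ∀ y : ZMod (n+1) → ℤ,
      vA n m (x + y) j = vA n m x j + (2 * y j - y (j+1) - y (j-1)) := by
    intro y
    simp only [vA, Matrix.mulVec_add, Pi.add_apply, cartan_mulVec n hn]
    ring
  rw [hlin]
  by_cases hjK : j ∈ K
  · have h0 := hx j
    have h1 := hchi_le_one (j+1)
    have h2 := hchi_le_one (j-1)
    have h3 : chi n K j = 1 := by rw [hchi]; simp [hjK]
    linarith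
  · by_cases hjb : b j = 0
    · have h0 := hxb j
      rw [hlin] at h0
      have h1 := hchi_le_b (j+1)
      have h2 := hchi_le_b (j-1)
      have h3 : chi n K j = 0 := by rw [hchi]; simp [hjK]
      linarith
    · have := hout j ⟨hjb, hjK⟩
      rw [hlin] at this
      exact this
end

section
/- If x and y are dominant vectors in ℤ^{n+1} and y covers x, then either y − x = 𝟙 (the difference of weights is the canonical imaginary root δ), or y − x = χ_K for some arc K (the difference is the highest root α_K of a proper connected subdiagram K of the affine Dynkin diagram). -/
lemma zmod_one_ne (n : ℕ) (hn : 2 ≤ n) : (1 : ZMod (n+1)) ≠ 0 := by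
  haveI : Fact (1 < n + 1) := ⟨by omega⟩
  exact one_ne_zero

lemma zmod_two_ne (n : ℕ) (hn : 2 ≤ n) : (2 : ZMod (n+1)) ≠ 0 := by
  haveI : NeZero (n+1) := ⟨by omega⟩
  have hdvd : ((2 : ℕ) : ZMod (n+1)) = 0 ↔ (n+1) ∣ 2 :=
    ZMod.natCast_eq_zero_iff 2 (n+1)
  intro h
  have h2 : ((2 : ℕ) : ZMod (n+1)) = 0 := by push_cast; exact h
  have h3 := Nat.le_of_dvd (by norm_num) (hdvd.mp h2)
  omega

lemma zmod_cast_inj (n : ℕ) (s t : ℕ) (hs : s ≤ n) (ht : t ≤ n)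
    (h : (s : ZMod (n+1)) = t) : s = t := by
  haveI : NeZero (n+1) := ⟨by omega⟩
  have := congrArg ZMod.val h
  rwa [ZMod.val_cast_of_lt (by omega), ZMod.val_cast_of_lt (by omega)] at this

lemma vA_eq (n : ℕ) (hn : 2 ≤ n) (m : ℤ) (x : ZMod (n+1) → ℤ) (j : ZMod (n+1)) :
    vA n m x j = m * (if j = 0 then 1 else 0) + (2 * x j - x (j+1) - x (j-1)) := by
  have h1 : j + 1 ≠ j := fun h => zmod_one_ne n hn (by linear_combination h)
  have h2 : j - 1 ≠ j := fun h => zmod_one_ne n hn (by linear_combination -h)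
  have h3 : j + 1 ≠ j - 1 := fun h => zmod_two_ne n hn (by linear_combination h)
  unfold vA cartanA
  rw [Matrix.mulVec, dotProduct]
  congr 1
  have step : ∀ k : ZMod (n+1),
      (Matrix.of fun i j => if i = j then (2:ℤ) else if j = i + 1 ∨ j = i - 1 then -1 else 0) j k * x k
      = (if k = j then 2 * x k else 0) + (if k = j + 1 then -x k else 0) + (if k = j - 1 then -x k else 0) := by
    intro k
    simp only [Matrix.of_apply]
    by_cases e1 : k = j
    · subst e1
      rw [if_pos rfl, if_pos rfl, if_neg (fun h => h1 h.symm), if_neg (fun h => h2 h.symm)]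
      ring
    · rw [if_neg (fun h => e1 h.symm), if_neg e1]
      by_cases e2 : k = j + 1
      · rw [if_pos (Or.inl e2), if_pos e2, if_neg (fun h : k = j - 1 => h3 (e2.symm.trans h))]
        ring
      · by_cases e3 : k = j - 1
        · rw [if_pos (Or.inr e3), if_neg e2, if_pos e3]
          ring
        · rw [if_neg (by tauto), if_neg e2, if_neg e3]
          ring
  rw [Finset.sum_congr rfl fun k _ => step k]
  rw [Finset.sum_add_distrib, Finset.sum_add_distrib,
    Finset.sum_ite_eq' Finset.univ j (fun k => 2 * x k),
    Finset.sum_ite_eq' Finset.univ (j+1) (fun k => -x k),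
    Finset.sum_ite_eq' Finset.univ (j-1) (fun k => -x k)]
  simp only [Finset.mem_univ, if_true]
  ring

/-- If `y` covers `x` in the dominance order on dominant vectors, then
`y - x = 𝟙` (the difference is `δ`) or `y - x = χ_K` for some arc `K`. -/
theorem stmt_8 (n : ℕ) (hn : 2 ≤ n) (m : ℤ) (hm : 1 ≤ m)
    (x y : ZMod (n + 1) → ℤ) (hcov : CoversA n m x y) :
    (y - x = fun _ => 1) ∨ ∃ K, IsArc n K ∧ y - x = chi n K := by
  classical
  haveI : NeZero (n+1) := ⟨by omega⟩
  obtain ⟨hdx, hdy, hxy, hnex⟩ := hcov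
  have hle : x ≤ y := le_of_lt hxy
  have hlep : ∀ j, x j ≤ y j := fun j => hle j
  have key : ∀ z : ZMod (n+1) → ℤ, DomA n m z → x < z → z ≤ y → z = y := by
    intro z hz hxz hzy
    by_contra hne
    exact hnex ⟨z, hz, hxz, lt_of_le_of_ne hzy hne⟩
  by_cases hall : ∀ j, x j + 1 ≤ y j
  · left
    have hdz : DomA n m (fun j => x j + 1) := by
      intro j
      have hx := hdx j
      rw [vA_eq n hn] at hx ⊢
      linarith
    have hxz : x < fun j => x j + 1 := by
      rw [Pi.lt_def]
      exact ⟨fun j => by simp, 0, by simp⟩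
    have heq := key _ hdz hxz (fun j => hall j)
    funext j
    have := congrFun heq j
    simp only [Pi.sub_apply]
    omega
  · right
    push_neg at hall
    obtain ⟨c, hc⟩ := hall
    have hc0 : y c = x c := le_antisymm (by omega) (hle c)
    obtain ⟨a, ha⟩ : ∃ a, x a < y a := (Pi.lt_def.mp hxy).2
    -- backward search for the left end of the run containing a
    have hPex : ∃ s : ℕ, y (a - (s:ℕ)) = x (a - (s:ℕ)) := by
      refine ⟨(a - c).val, ?_⟩
      rw [ZMod.natCast_val (a - c) |>.trans (ZMod.cast_id _ _)]
      simpa using hc0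
    obtain ⟨s₀, hs₀spec, hs₀min⟩ :
        ∃ s₀ : ℕ, (y (a - (s₀:ℕ)) = x (a - (s₀:ℕ))) ∧
          ∀ t : ℕ, t < s₀ → ¬ (y (a - (t:ℕ)) = x (a - (t:ℕ))) :=
      ⟨Nat.find hPex, Nat.find_spec hPex, fun t ht => Nat.find_min hPex ht⟩
    have hs₀pos : 1 ≤ s₀ := by
      rcases Nat.eq_zero_or_pos s₀ with h | h
      · exfalso
        have h0 := hs₀spec
        rw [h] at h0
        simp only [Nat.cast_zero, sub_zero] at h0
        omega
      · omega
    obtain ⟨b, hbdef⟩ : ∃ b : ZMod (n+1), b = a - ((s₀ - 1 : ℕ) : ZMod (n+1)) := ⟨_, rfl⟩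
    have hb1 : x b < y b := by
      have hmin := hs₀min (s₀ - 1) (by omega)
      rw [hbdef]
      exact lt_of_le_of_ne (hlep _) (fun h => hmin h.symm)
    have hbm : y (b - 1) = x (b - 1) := by
      have heq : b - 1 = a - ((s₀ : ℕ) : ZMod (n+1)) := by
        rw [hbdef]
        have h1 : ((s₀ - 1 : ℕ) : ZMod (n+1)) + 1 = ((s₀ : ℕ) : ZMod (n+1)) := by
          rw [show s₀ = (s₀ - 1) + 1 by omega]
          push_cast
          ring
        linear_combination -h1
      rw [heq]
      exact hs₀spec
    -- forward search for the length of the run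
    have hQex : ∃ t : ℕ, y (b + (t:ℕ)) = x (b + (t:ℕ)) := by
      refine ⟨n, ?_⟩
      have : b + ((n:ℕ) : ZMod (n+1)) = b - 1 := by
        have h0 : ((n+1 : ℕ) : ZMod (n+1)) = 0 := ZMod.natCast_self (n+1)
        push_cast at h0 ⊢
        linear_combination h0
      rw [this]
      exact hbm
    obtain ⟨L, hQL, hQmin, hLn⟩ :
        ∃ L : ℕ, (y (b + (L:ℕ)) = x (b + (L:ℕ))) ∧
          (∀ t : ℕ, t < L → ¬ (y (b + (t:ℕ)) = x (b + (t:ℕ)))) ∧ L ≤ n :=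
      ⟨Nat.find hQex, Nat.find_spec hQex, fun t ht => Nat.find_min hQex ht,
        Nat.find_le (by
          have heq : b + ((n:ℕ) : ZMod (n+1)) = b - 1 := by
            have h0 : ((n+1 : ℕ) : ZMod (n+1)) = 0 := ZMod.natCast_self (n+1)
            push_cast at h0 ⊢
            linear_combination h0
          rw [heq]; exact hbm)⟩
    have hL1 : 1 ≤ L := by
      rcases Nat.eq_zero_or_pos L with h | h
      · exfalso
        have h0 := hQL
        rw [h] at h0
        simp only [Nat.cast_zero, add_zero] at h0
        omega
      · omega
    have hrun : ∀ s : ℕ, s < L → x (b + (s:ℕ)) < y (b + (s:ℕ)) := by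
      intro s hs
      have hmin := hQmin s hs
      exact lt_of_le_of_ne (hlep _) (fun h => hmin h.symm)
    set K : Set (ZMod (n+1)) := {j | ∃ s : ℕ, s < L ∧ j = b + (s:ℕ)} with hK
    have memb : b ∈ K := ⟨0, hL1, by simp⟩
    -- the two outside neighbours of K
    have hright : ∀ j, j ∉ K → j + 1 ∈ K → y j = x j := by
      intro j hj ⟨s, hs, hjs⟩
      rcases Nat.eq_zero_or_pos s with h | h
      · have : j = b - 1 := by
          rw [h] at hjs
          simp only [Nat.cast_zero, add_zero] at hjs
          linear_combination hjs
        rw [this]; exact hbm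
      · exfalso
        apply hj
        refine ⟨s - 1, by omega, ?_⟩
        have hcast : ((s - 1 : ℕ) : ZMod (n+1)) = ((s:ℕ) : ZMod (n+1)) - 1 := by
          rw [show s = (s - 1) + 1 by omega]
          push_cast
          ring
        rw [hcast]
        linear_combination hjs
    have hleft : ∀ j, j ∉ K → j - 1 ∈ K → y j = x j := by
      intro j hj ⟨s, hs, hjs⟩
      by_cases h : s + 1 < L
      · exfalso
        apply hj
        refine ⟨s + 1, h, ?_⟩
        push_cast
        linear_combination hjs
      · have hsL : s + 1 = L := by omega
        have : j = b + ((L : ℕ) : ZMod (n+1)) := by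
          rw [← hsL]
          push_cast
          linear_combination hjs
        rw [this]
        exact hQL
    -- the indicator vector
    have hchi : ∀ j, chi n K j = if j ∈ K then 1 else 0 := by
      intro j
      simp [chi, Set.indicator_apply]
    have hchi0 : ∀ j, 0 ≤ chi n K j := by
      intro j; rw [hchi]; split <;> norm_num
    have hchi1 : ∀ j, chi n K j ≤ 1 := by
      intro j; rw [hchi]; split <;> norm_num
    have hchile : ∀ j, chi n K j ≤ y j - x j := by
      intro j
      rw [hchi]
      by_cases h : j ∈ K
      · rw [if_pos h]
        obtain ⟨s, hs, rfl⟩ := h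
        have h1 := hrun s hs
        omega
      · rw [if_neg h]
        have h1 := hlep j
        omega
    -- dominance of z = x + χ_K
    have hdz : DomA n m (fun j => x j + chi n K j) := by
      intro j
      have hx := hdx j
      have hy := hdy j
      rw [vA_eq n hn] at hx hy ⊢
      by_cases hjK : j ∈ K
      · have h1 := hchi1 (j+1)
        have h2 := hchi1 (j-1)
        rw [hchi j, if_pos hjK]
        linarith
      · rw [hchi j, if_neg hjK]
        by_cases hp : j + 1 ∈ K
        · have hyj := hright j hjK hp
          have h1 := hchile (j+1)
          have h2 := hchile (j-1)
          linarith
        · by_cases hm' : j - 1 ∈ K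
          · have hyj := hleft j hjK hm'
            have h1 := hchile (j+1)
            have h2 := hchile (j-1)
            linarith
          · rw [hchi (j+1), if_neg hp, hchi (j-1), if_neg hm']
            linarith
    have hxz : x < fun j => x j + chi n K j := by
      rw [Pi.lt_def]
      refine ⟨fun j => by have := hchi0 j; simp; omega, b, ?_⟩
      have : chi n K b = 1 := by rw [hchi, if_pos memb]
      simp [this]
    have hzy : (fun j => x j + chi n K j) ≤ y := by
      intro j
      show x j + chi n K j ≤ y j
      have h1 := hchile j
      omega
    have heq := key _ hdz hxz hzy
    have hyx : y - x = chi n K := by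
      funext j
      have h1 := congrFun heq j
      simp only [Pi.sub_apply]
      omega
    refine ⟨K, ⟨⟨b, memb⟩, ?_, ?_⟩, hyx⟩
    · -- K ≠ univ : b - 1 ∉ K
      intro huniv
      have : b - 1 ∈ K := huniv ▸ Set.mem_univ _
      obtain ⟨s, hs, hjs⟩ := this
      have hcast : ((s:ℕ) : ZMod (n+1)) = ((n:ℕ) : ZMod (n+1)) := by
        have h0 : ((n+1 : ℕ) : ZMod (n+1)) = 0 := ZMod.natCast_self (n+1)
        push_cast at h0 ⊢
        linear_combination -hjs - h0
      have := zmod_cast_inj n s n (by omega) le_rfl hcast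
      omega
    · -- connectivity
      rw [SimpleGraph.connected_iff]
      constructor
      · intro u v
        have huniv : ∀ (s : ℕ) (hs : s < L),
            ((cycleG n).induce K).Reachable ⟨b + (s:ℕ), ⟨s, hs, rfl⟩⟩ ⟨b, memb⟩ := by
          intro s
          induction s with
          | zero =>
            intro hs
            have he : (⟨b + ((0:ℕ) : ZMod (n+1)), ⟨0, hs, rfl⟩⟩ : K) = ⟨b, memb⟩ := by
              apply Subtype.ext
              simp
            rw [he]
          | succ s ih =>
            intro hs
            have hs' : s < L := by omega
            have hadjcyc : (cycleG n).Adj (b + ((s+1:ℕ) : ZMod (n+1))) (b + ((s:ℕ) : ZMod (n+1))) := by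
              rw [cycleG, SimpleGraph.fromRel_adj]
              constructor
              · intro h
                apply zmod_one_ne n hn
                push_cast at h
                linear_combination h
              · right
                push_cast
                ring
            have hadj : ((cycleG n).induce K).Adj ⟨b + ((s+1:ℕ) : ZMod (n+1)), ⟨s+1, hs, rfl⟩⟩
                ⟨b + ((s:ℕ) : ZMod (n+1)), ⟨s, hs', rfl⟩⟩ := hadjcyc
            exact hadj.reachable.trans (ih hs')
        obtain ⟨su, hsu, hu⟩ := u.2
        obtain ⟨sv, hsv, hv⟩ := v.2
        have hu' : u = ⟨b + (su:ℕ), ⟨su, hsu, rfl⟩⟩ := Subtype.ext hu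
        have hv' : v = ⟨b + (sv:ℕ), ⟨sv, hsv, rfl⟩⟩ := Subtype.ext hv
        rw [hu', hv']
        exact (huniv su hsu).trans (huniv sv hsv).symm
      · exact ⟨⟨b, memb⟩⟩
end

section
/- For dominant x, y ∈ ℤ² with x < y, y covers x if and only if one of the following holds: y − x = (1, 0); or y − x = (0, 1); or y − x = (1, 1) and v(y) ∈ {(1, 0), (0, 1), (1, 1)} (i.e. the larger weight is a fundamental weight ω_0 or ω_1, or equals ω_0 + ω_1, up to a multiple of δ). -/
/-- Cartan matrix of affine type `A_1^{(1)}`. -/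
def cartanA1 : Matrix (Fin 2) (Fin 2) ℤ := !![2, -2; -2, 2]

/-- Value of the level-`m` weight `m·ω₀ + x₀·α₀ + x₁·α₁` on the coroot `αⱼ^∨`. -/
def vA1 (m : ℤ) (x : Fin 2 → ℤ) (j : Fin 2) : ℤ :=
  m * (if j = 0 then 1 else 0) + cartanA1.mulVec x j

/-- Dominance of the coefficient vector `x`. -/
def DomA1 (m : ℤ) (x : Fin 2 → ℤ) : Prop := ∀ j, 0 ≤ vA1 m x j

lemma vA1_zero (m : ℤ) (x : Fin 2 → ℤ) : vA1 m x 0 = m + 2 * x 0 - 2 * x 1 := by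
  simp [vA1, cartanA1, Matrix.mulVec, dotProduct, Fin.sum_univ_two]
  ring

lemma vA1_one (m : ℤ) (x : Fin 2 → ℤ) : vA1 m x 1 = 2 * x 1 - 2 * x 0 := by
  simp [vA1, cartanA1, Matrix.mulVec, dotProduct, Fin.sum_univ_two]
  ring

lemma dom_iff (m : ℤ) (x : Fin 2 → ℤ) :
    DomA1 m x ↔ 0 ≤ m + 2 * x 0 - 2 * x 1 ∧ 0 ≤ 2 * x 1 - 2 * x 0 := by
  unfold DomA1
  rw [Fin.forall_fin_two, vA1_zero, vA1_one]

lemma lt_iff' (x y : Fin 2 → ℤ) :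
    x < y ↔ (x 0 ≤ y 0 ∧ x 1 ≤ y 1) ∧ (x 0 < y 0 ∨ x 1 < y 1) := by
  rw [Pi.lt_def]
  simp [Pi.le_def, Fin.forall_fin_two, Fin.exists_fin_two]

lemma sub_eq_iff' (x y : Fin 2 → ℤ) (p q : ℤ) :
    y - x = ![p, q] ↔ y 0 - x 0 = p ∧ y 1 - x 1 = q := by
  rw [funext_iff, Fin.forall_fin_two]
  simp

lemma veq_iff (m : ℤ) (y : Fin 2 → ℤ) (p q : ℤ) :
    vA1 m y = ![p, q] ↔ vA1 m y 0 = p ∧ vA1 m y 1 = q := by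
  rw [funext_iff, Fin.forall_fin_two]
  simp

/-- for dominant `x < y` in type `A_1^{(1)}`, `y` covers `x` iff
`y - x = (1,0)`, or `y - x = (0,1)`, or `y - x = (1,1)` and
`v(y) ∈ {(1,0), (0,1), (1,1)}` (`y` is `ω₀`, `ω₁` or `ω₀ + ω₁` up to a
multiple of `δ`). -/
theorem stmt_9 (m : ℤ) (hm : 1 ≤ m) (x y : Fin 2 → ℤ)
    (hx : DomA1 m x) (hy : DomA1 m y) (hlt : x < y) :
    (¬∃ z, DomA1 m z ∧ x < z ∧ z < y) ↔
      (y - x = ![1, 0] ∨ y - x = ![0, 1] ∨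
        (y - x = ![1, 1] ∧
          (vA1 m y = ![1, 0] ∨ vA1 m y = ![0, 1] ∨ vA1 m y = ![1, 1]))) := by
  rw [dom_iff] at hx hy
  rw [lt_iff'] at hlt
  rw [sub_eq_iff', sub_eq_iff', sub_eq_iff', veq_iff, veq_iff, veq_iff,
    vA1_zero, vA1_one]
  constructor
  · intro hno
    by_contra hc
    apply hno
    by_cases h1 : x 0 + 1 ≤ y 0 ∧ x 1 + 1 ≤ y 1 ∧ x 0 + x 1 + 3 ≤ y 0 + y 1
    · refine ⟨![x 0 + 1, x 1 + 1], ?_, ?_, ?_⟩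
      · rw [dom_iff]; simp only [Matrix.cons_val_zero, Matrix.cons_val_one, Matrix.head_cons]; omega
      · rw [lt_iff']; simp only [Matrix.cons_val_zero, Matrix.cons_val_one, Matrix.head_cons]; omega
      · rw [lt_iff']; simp only [Matrix.cons_val_zero, Matrix.cons_val_one, Matrix.head_cons]; omega
    by_cases h2 : y 1 = x 1 ∧ x 0 + 2 ≤ y 0
    · refine ⟨![x 0 + 1, x 1], ?_, ?_, ?_⟩
      · rw [dom_iff]; simp only [Matrix.cons_val_zero, Matrix.cons_val_one, Matrix.head_cons]; omega
      · rw [lt_iff']; simp only [Matrix.cons_val_zero, Matrix.cons_val_one, Matrix.head_cons]; omega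
      · rw [lt_iff']; simp only [Matrix.cons_val_zero, Matrix.cons_val_one, Matrix.head_cons]; omega
    by_cases h3 : y 0 = x 0 ∧ x 1 + 2 ≤ y 1
    · refine ⟨![x 0, x 1 + 1], ?_, ?_, ?_⟩
      · rw [dom_iff]; simp only [Matrix.cons_val_zero, Matrix.cons_val_one, Matrix.head_cons]; omega
      · rw [lt_iff']; simp only [Matrix.cons_val_zero, Matrix.cons_val_one, Matrix.head_cons]; omega
      · rw [lt_iff']; simp only [Matrix.cons_val_zero, Matrix.cons_val_one, Matrix.head_cons]; omega
    by_cases h4 : 1 ≤ x 1 - x 0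
    · refine ⟨![x 0 + 1, x 1], ?_, ?_, ?_⟩
      · rw [dom_iff]; simp only [Matrix.cons_val_zero, Matrix.cons_val_one, Matrix.head_cons]; omega
      · rw [lt_iff']; simp only [Matrix.cons_val_zero, Matrix.cons_val_one, Matrix.head_cons]; omega
      · rw [lt_iff']; simp only [Matrix.cons_val_zero, Matrix.cons_val_one, Matrix.head_cons]; omega
    · refine ⟨![x 0, x 1 + 1], ?_, ?_, ?_⟩
      · rw [dom_iff]; simp only [Matrix.cons_val_zero, Matrix.cons_val_one, Matrix.head_cons]; omega
      · rw [lt_iff']; simp only [Matrix.cons_val_zero, Matrix.cons_val_one, Matrix.head_cons]; omega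
      · rw [lt_iff']; simp only [Matrix.cons_val_zero, Matrix.cons_val_one, Matrix.head_cons]; omega
  · rintro hrhs ⟨z, hzd, hxz, hzy⟩
    rw [dom_iff] at hzd
    rw [lt_iff'] at hxz hzy
    omega
end

section
/- Let x and y be dominant vectors in ℤ^{n+1} with x < y. Then y covers x if and only if one of the following holds: (a) y − x = e_i for some i ∈ ℤ/(n+1)ℤ (the difference is a simple root); (b) y − x = χ_K for some arc K with at least two elements, and v(x)_j = 0 for every j ∈ K (the difference is the highest root α_K of a proper connected subdiagram on whose vertices the smaller weight vanishes); or (c) y − x = 𝟙 and v(y) = e_i for some i (the difference is δ and both weights are fundamental weights up to multiples of δ). -/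

-- ZMod helpers
lemma zz_one_ne (N : ℕ) (h : 3 ≤ N) : (1 : ZMod N) ≠ 0 := by
  have : ((1:ℕ) : ZMod N) ≠ 0 := by
    rw [Ne, ZMod.natCast_eq_zero_iff]
    exact fun hd => by have := Nat.le_of_dvd one_pos hd; omega
  simpa using this

lemma zz_cast_inj (N : ℕ) (k k' : ℕ) (hk : k < N) (hk' : k' < N)
    (he : (k : ZMod N) = k') : k = k' := by
  haveI : NeZero N := ⟨by omega⟩
  have := congrArg ZMod.val he
  rwa [ZMod.val_natCast_of_lt hk, ZMod.val_natCast_of_lt hk'] at this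

lemma zz_rep (N : ℕ) (h : 3 ≤ N) (a b : ZMod N) : b = a + ((b - a).val : ℕ) := by
  haveI : NeZero N := ⟨by omega⟩
  simp [ZMod.natCast_val, ZMod.cast_id]

lemma zz_cast_val (N : ℕ) (h : 3 ≤ N) (c : ZMod N) : ((c.val : ℕ) : ZMod N) = c := by
  haveI : NeZero N := ⟨by omega⟩
  simp [ZMod.natCast_val, ZMod.cast_id]

lemma zz_neg_one (N : ℕ) (h : 3 ≤ N) : ((N - 1 : ℕ) : ZMod N) = -1 := by
  have h0 : ((N:ℕ) : ZMod N) = 0 := ZMod.natCast_self N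
  push_cast [Nat.cast_sub (by omega : 1 ≤ N)] at h0 ⊢
  linear_combination h0

lemma zz_val_succ (N : ℕ) (h : 3 ≤ N) (c : ZMod N) : (c+1).val = (c.val + 1) % N := by
  haveI : NeZero N := ⟨by omega⟩
  haveI : Fact (1 < N) := ⟨by omega⟩
  rw [ZMod.val_add, ZMod.val_one]

lemma zz_val_pred (N : ℕ) (h : 3 ≤ N) (c : ZMod N) : (c-1).val = (c.val + (N-1)) % N := by
  haveI : NeZero N := ⟨by omega⟩
  have e : c - 1 = c + ((N-1 : ℕ) : ZMod N) := by rw [zz_neg_one N h]; ring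
  rw [e, ZMod.val_add, ZMod.val_natCast_of_lt (by omega)]

lemma zz_val_lt (N : ℕ) (h : 3 ≤ N) (c : ZMod N) : c.val < N := by
  haveI : NeZero N := ⟨by omega⟩
  exact ZMod.val_lt c

lemma mod_succ (N p : ℕ) (h : p < N) : (p+1) % N = if p + 1 = N then 0 else p + 1 := by
  split_ifs with h'
  · simp [h']
  · exact Nat.mod_eq_of_lt (by omega)

lemma mod_pred (N p : ℕ) (h3 : 3 ≤ N) (h : p < N) :
    (p + (N-1)) % N = if p = 0 then N - 1 else p - 1 := by
  split_ifs with h'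
  · subst h'; simp only [Nat.zero_add]; exact Nat.mod_eq_of_lt (by omega)
  · have e : p + (N-1) = N + (p - 1) := by omega
    rw [e, Nat.add_mod_left]
    exact Nat.mod_eq_of_lt (by omega)

-- ascent/descent
lemma ascent_aux (N : ℕ) (f : ZMod N → ℤ) (h01 : ∀ j, f j = 0 ∨ f j = 1) (t : ℕ) :
    ∀ u : ZMod N, f u = 0 → f (u + (t:ℕ)) = 1 → ∃ c, f c = 0 ∧ f (c + 1) = 1 := by
  induction t with
  | zero => intro u h0 h1; simp at h1; omega
  | succ t ih =>
    intro u h0 h1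
    rcases h01 (u + (t:ℕ)) with h | h
    · refine ⟨u + (t:ℕ), h, ?_⟩
      have : u + ((t:ℕ):ZMod N) + 1 = u + (((t+1:ℕ)):ZMod N) := by push_cast; ring
      rw [this]; exact h1
    · exact ih u h0 h
lemma ascent (N : ℕ) (h3 : 3 ≤ N) (f : ZMod N → ℤ) (h01 : ∀ j, f j = 0 ∨ f j = 1)
    (u b : ZMod N) (hu : f u = 0) (hb : f b = 1) : ∃ c, f c = 0 ∧ f (c + 1) = 1 := by
  have := zz_rep N h3 u b
  exact ascent_aux N f h01 _ u hu (by rw [← this]; exact hb)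

lemma descent (N : ℕ) (h3 : 3 ≤ N) (f : ZMod N → ℤ) (h01 : ∀ j, f j = 0 ∨ f j = 1)
    (u b : ZMod N) (hu : f u = 0) (hb : f b = 1) : ∃ c, f c = 1 ∧ f (c + 1) = 0 := by
  obtain ⟨c, hc0, hc1⟩ := ascent N h3 (fun j => f (-j)) (fun j => h01 (-j)) (-u) (-b)
    (by simpa using hu) (by simpa using hb)
  refine ⟨-(c+1), by simpa using hc1, ?_⟩
  have : -(c+1) + 1 = -c := by ring
  rw [this]; exact hc0

def indF (N : ℕ) (a : ZMod N) (len : ℕ) : ZMod N → ℤ :=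
  fun j => if (j - a).val < len then 1 else 0

lemma indF_01 (N : ℕ) (a : ZMod N) (len : ℕ) (j : ZMod N) :
    indF N a len j = 0 ∨ indF N a len j = 1 := by
  unfold indF; split_ifs <;> simp

lemma indF_nonneg (N : ℕ) (a : ZMod N) (len : ℕ) (j : ZMod N) : 0 ≤ indF N a len j := by
  rcases indF_01 N a len j with h | h <;> omega

lemma indF_mem (N : ℕ) (h3 : 3 ≤ N) (a : ZMod N) (len k : ℕ) (hk : k < len)
    (hlen : len ≤ N - 1) : indF N a len (a + (k:ℕ)) = 1 := by
  unfold indF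
  rw [add_sub_cancel_left, ZMod.val_natCast_of_lt (by omega)]
  simp [hk]

lemma indF_notmem (N : ℕ) (h3 : 3 ≤ N) (a : ZMod N) (len k : ℕ) (hk : len ≤ k)
    (hkN : k < N) : indF N a len (a + (k:ℕ)) = 0 := by
  unfold indF
  rw [add_sub_cancel_left, ZMod.val_natCast_of_lt hkN]
  simp; omega

lemma indF_mono (N : ℕ) (a : ZMod N) (len len' : ℕ) (h : len ≤ len') (j : ZMod N) :
    indF N a len j ≤ indF N a len' j := by
  unfold indF; split_ifs with h1 h2 <;> omega

lemma indF_iff (N : ℕ) (a : ZMod N) (len : ℕ) (j : ZMod N) :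
    indF N a len j = 1 ↔ (j - a).val < len := by
  unfold indF; split_ifs with h <;> simp [h]

lemma indF_plus (N : ℕ) (h3 : 3 ≤ N) (a : ZMod N) (len : ℕ) (h1 : 1 ≤ len)
    (h2 : len ≤ N - 1) (j : ZMod N) (hj : indF N a len j = 0) :
    indF N a len (j+1) = if j = a - 1 then 1 else 0 := by
  set p := (j - a).val with hp
  have hplt : p < N := zz_val_lt N h3 (j - a)
  have hpge : len ≤ p := by
    by_contra hc
    unfold indF at hj; rw [if_pos (by omega)] at hj; omega
  have e1 : j + 1 - a = (j - a) + 1 := by ring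
  have e2 : (j + 1 - a).val = (p + 1) % N := by rw [e1, zz_val_succ N h3]
  have hiff : j = a - 1 ↔ p = N - 1 := by
    constructor
    · intro h; rw [hp, h]
      have : a - 1 - a = -1 := by ring
      rw [this, ← zz_neg_one N h3, ZMod.val_natCast_of_lt (by omega)]
    · intro h
      have := zz_rep N h3 a j
      rw [← hp, h, zz_neg_one N h3] at this
      rw [this]; ring
  unfold indF
  rw [e2, mod_succ N p hplt]
  by_cases hc : p = N - 1
  · rw [if_pos (show p + 1 = N by omega), if_pos (show 0 < len by omega),
      if_pos (hiff.mpr hc)]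
  · rw [if_neg (show ¬ p + 1 = N by omega), if_neg (show ¬ p + 1 < len by omega),
      if_neg (fun h => hc (hiff.mp h))]

lemma indF_minus (N : ℕ) (h3 : 3 ≤ N) (a : ZMod N) (len : ℕ) (h1 : 1 ≤ len)
    (h2 : len ≤ N - 1) (j : ZMod N) (hj : indF N a len j = 0) :
    indF N a len (j-1) = if j = a + (len:ℕ) then 1 else 0 := by
  set p := (j - a).val with hp
  have hplt : p < N := zz_val_lt N h3 (j - a)
  have hpge : len ≤ p := by
    by_contra hc
    unfold indF at hj; rw [if_pos (by omega)] at hj; omega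
  have e1 : j - 1 - a = (j - a) - 1 := by ring
  have e2 : (j - 1 - a).val = (p + (N-1)) % N := by rw [e1, zz_val_pred N h3]
  have hiff : j = a + (len:ℕ) ↔ p = len := by
    constructor
    · intro h; rw [hp, h]
      have : a + (len:ℕ) - a = (len:ℕ) := by ring
      rw [this, ZMod.val_natCast_of_lt (by omega)]
    · intro h
      have hrep := zz_rep N h3 a j
      rw [← hp, h] at hrep
      exact hrep
  unfold indF
  rw [e2, mod_pred N p h3 hplt, if_neg (show ¬ p = 0 by omega)]
  by_cases hc : p = len
  · rw [if_pos (show p - 1 < len by omega), if_pos (hiff.mpr hc)]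
  · rw [if_neg (show ¬ p - 1 < len by omega), if_neg (fun h => hc (hiff.mp h))]

-- graph lemmas
lemma cyc_adj (n : ℕ) (u v : ZMod (n+1)) :
    (cycleG n).Adj u v ↔ u ≠ v ∧ (v = u + 1 ∨ u = v + 1) := by
  simp [cycleG, SimpleGraph.fromRel_adj]

lemma arc_conn (n : ℕ) (hn : 2 ≤ n) (a : ZMod (n+1)) (len : ℕ) (h1 : 1 ≤ len)
    (h2 : len ≤ n) : ((cycleG n).induce {j | (j - a).val < len}).Connected := by
  have h3 : 3 ≤ n + 1 := by omega
  set K : Set (ZMod (n+1)) := {j | (j - a).val < len} with hK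
  have haK : a ∈ K := by
    simp only [hK, Set.mem_setOf_eq, sub_self, ZMod.val_zero]; omega
  have hmem : ∀ k : ℕ, k < len → (a + (k:ℕ) : ZMod (n+1)) ∈ K := by
    intro k hk
    simp only [hK, Set.mem_setOf_eq, add_sub_cancel_left]
    rw [ZMod.val_natCast_of_lt (by omega)]; exact hk
  have key : ∀ k : ℕ, ∀ hk : k < len,
      ((cycleG n).induce K).Reachable ⟨a, haK⟩ ⟨a + (k:ℕ), hmem k hk⟩ := by
    intro k
    induction k with
    | zero =>
      intro hk
      have : (⟨a + ((0:ℕ) : ZMod (n+1)), hmem 0 hk⟩ : ↥K) = ⟨a, haK⟩ :=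
        Subtype.ext (by push_cast; ring)
      rw [this]
    | succ k ih =>
      intro hk
      have r1 := ih (by omega)
      have hne : (a + (k:ℕ) : ZMod (n+1)) ≠ a + ((k+1:ℕ) : ZMod (n+1)) := by
        intro h
        have := add_left_cancel h
        have := zz_cast_inj (n+1) k (k+1) (by omega) (by omega) this
        omega
      have hadj : ((cycleG n).induce K).Adj ⟨a + (k:ℕ), hmem k (by omega)⟩
          ⟨a + ((k+1:ℕ) : ZMod (n+1)), hmem (k+1) hk⟩ := by
        show (cycleG n).Adj (a + (k:ℕ)) (a + ((k+1:ℕ) : ZMod (n+1)))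
        rw [cyc_adj]
        exact ⟨hne, Or.inl (by push_cast; ring)⟩
      exact r1.trans hadj.reachable
  rw [SimpleGraph.connected_iff]
  refine ⟨fun u v => ?_, ⟨⟨a, haK⟩⟩⟩
  have hu : u = ⟨a + ((u.1 - a).val : ℕ), hmem _ u.2⟩ := Subtype.ext (zz_rep (n+1) h3 a u.1)
  have hv : v = ⟨a + ((v.1 - a).val : ℕ), hmem _ v.2⟩ := Subtype.ext (zz_rep (n+1) h3 a v.1)
  rw [hu, hv]
  exact (key _ u.2).symm.trans (key _ v.2)

lemma crossing (n : ℕ) (K : Set (ZMod (n+1)))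
    (hc : ((cycleG n).induce K).Connected) (S : Set (ZMod (n+1)))
    (a : ZMod (n+1)) (ha : a ∈ K) (haS : a ∈ S)
    (b : ZMod (n+1)) (hb : b ∈ K) (hbS : b ∉ S) :
    ∃ u v : ZMod (n+1), u ∈ K ∧ u ∉ S ∧ v ∈ K ∧ v ∈ S ∧ (cycleG n).Adj u v := by
  have hreach := hc.preconnected ⟨a, ha⟩ ⟨b, hb⟩
  obtain ⟨w⟩ := hreach
  suffices H : ∀ (p q : ↥K) (w : ((cycleG n).induce K).Walk p q), ↑p ∈ S → ↑q ∉ S →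
      ∃ u v : ZMod (n+1), u ∈ K ∧ u ∉ S ∧ v ∈ K ∧ v ∈ S ∧ (cycleG n).Adj u v by
    exact H _ _ w haS hbS
  intro p q w
  induction w with
  | nil => intro h1 h2; exact absurd h1 h2
  | @cons p' v' q' hadj w ih =>
    intro h1 h2
    by_cases hv : ↑v' ∈ S
    · exact ih hv h2
    · have hadj' : (cycleG n).Adj ↑p' ↑v' := hadj
      exact ⟨↑v', ↑p', v'.2, hv, p'.2, h1, hadj'.symm⟩


lemma zz_two_ne (N : ℕ) (h : 3 ≤ N) : (2 : ZMod N) ≠ 0 := by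
  have : ((2:ℕ) : ZMod N) ≠ 0 := by
    rw [Ne, ZMod.natCast_eq_zero_iff]
    exact fun hd => by have := Nat.le_of_dvd two_pos hd; omega
  simpa using this

lemma va_eq (n : ℕ) (hn : 2 ≤ n) (m : ℤ) (x : ZMod (n+1) → ℤ) (j : ZMod (n+1)) :
    vA n m x j = m * (if j = 0 then 1 else 0) + (2 * x j - x (j - 1) - x (j + 1)) := by
  have hN : 3 ≤ n + 1 := by omega
  have h1 : j + 1 ≠ j := fun h => zz_one_ne (n+1) hN (by linear_combination h)
  have h2 : j - 1 ≠ j := fun h => zz_one_ne (n+1) hN (by linear_combination -h)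
  have h3 : j + 1 ≠ j - 1 := fun h => zz_two_ne (n+1) hN (by linear_combination h)
  have key : ∀ k, cartanA n j k * x k
      = (if k = j then 2 * x j else 0) + ((if k = j + 1 then -x (j+1) else 0)
        + (if k = j - 1 then -x (j-1) else 0)) := by
    intro k
    simp only [cartanA, Matrix.of_apply]
    rcases eq_or_ne k j with rfl | hkj
    · rw [if_pos rfl, if_pos rfl, if_neg (Ne.symm h1), if_neg (Ne.symm h2)]; ring
    · rw [if_neg (fun h => hkj h.symm), if_neg hkj]
      by_cases hk1 : k = j + 1
      · subst hk1
        rw [if_pos (Or.inl rfl), if_pos rfl, if_neg h3]; ring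
      · by_cases hk2 : k = j - 1
        · subst hk2
          rw [if_pos (Or.inr rfl), if_neg (Ne.symm h3 : j - 1 ≠ j + 1), if_pos rfl]; ring
        · rw [if_neg (by tauto), if_neg hk1, if_neg hk2]; ring
  unfold vA Matrix.mulVec dotProduct
  rw [Finset.sum_congr rfl (fun k _ => key k)]
  rw [Finset.sum_add_distrib, Finset.sum_add_distrib,
    Finset.sum_ite_eq' Finset.univ j, Finset.sum_ite_eq' Finset.univ (j+1),
    Finset.sum_ite_eq' Finset.univ (j-1)]
  simp; ring

lemma va_add (n : ℕ) (hn : 2 ≤ n) (m : ℤ) (x g : ZMod (n+1) → ℤ) (j : ZMod (n+1)) :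
    vA n m (fun k => x k + g k) j = vA n m x j + (2 * g j - g (j-1) - g (j+1)) := by
  rw [va_eq n hn, va_eq n hn]; ring

lemma dom_add01 (n : ℕ) (hn : 2 ≤ n) (m : ℤ) (x : ZMod (n+1) → ℤ) (hx : DomA n m x)
    (g : ZMod (n+1) → ℤ) (h01 : ∀ j, g j = 0 ∨ g j = 1)
    (hb : ∀ j, g j = 0 → g (j-1) + g (j+1) ≤ vA n m x j) :
    DomA n m (fun k => x k + g k) := by
  intro j
  rw [va_add n hn]
  rcases h01 j with h | h
  · linarith [hb j h]
  · rcases h01 (j-1) with h1|h1 <;> rcases h01 (j+1) with h2|h2 <;> linarith [hx j]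

lemma sum_va (n : ℕ) (hn : 2 ≤ n) (m : ℤ) (x : ZMod (n+1) → ℤ) :
    ∑ j, vA n m x j = m := by
  rw [Finset.sum_congr rfl fun j _ => va_eq n hn m x j]
  rw [Finset.sum_add_distrib]
  have e1 : ∑ j : ZMod (n+1), m * (if j = 0 then 1 else 0) = m := by
    simp only [mul_ite, mul_one, mul_zero]
    rw [Finset.sum_ite_eq' Finset.univ (0 : ZMod (n+1))]
    simp
  have e2 : ∑ j : ZMod (n+1), (2*x j - x (j-1) - x (j+1)) = 0 := by
    have hs1 : ∑ j : ZMod (n+1), x (j-1) = ∑ j : ZMod (n+1), x j :=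
      Fintype.sum_equiv (Equiv.subRight (1 : ZMod (n+1))) _ _ (fun j => rfl)
    have hs2 : ∑ j : ZMod (n+1), x (j+1) = ∑ j : ZMod (n+1), x j :=
      Fintype.sum_equiv (Equiv.addRight (1 : ZMod (n+1))) _ _ (fun j => rfl)
    have : ∑ j : ZMod (n+1), (2*x j - x (j-1) - x (j+1))
        = 2 * (∑ j : ZMod (n+1), x j) - (∑ j : ZMod (n+1), x (j-1))
          - (∑ j : ZMod (n+1), x (j+1)) := by
      rw [Finset.sum_sub_distrib, Finset.sum_sub_distrib, ← Finset.mul_sum]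
    rw [this, hs1, hs2]; ring
  rw [e1, e2]; ring

lemma fwdlem (n : ℕ) (hn : 2 ≤ n) (m : ℤ) (hm : 1 ≤ m)
    (x y : ZMod (n + 1) → ℤ) (hx : DomA n m x) (hy : DomA n m y) (hlt : x < y)
    (hcov : CoversA n m x y) :
      (∃ i, y - x = eA n i) ∨
      (∃ K, IsArc n K ∧ K.Nontrivial ∧ y - x = chi n K ∧ ∀ j ∈ K, vA n m x j = 0) ∨
      ((y - x = fun _ => 1) ∧ ∃ i, vA n m y = eA n i) := by
  classical
  have h3 : 3 ≤ n + 1 := by omega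
  obtain ⟨-, -, -, hno⟩ := hcov
  set d : ZMod (n+1) → ℤ := fun j => y j - x j with hdd
  have hd0 : ∀ j, 0 ≤ d j := fun j => by
    have := Pi.le_def.mp hlt.le j; simp only [hdd]; linarith
  obtain ⟨-, hb0⟩ := Pi.lt_def.mp hlt
  obtain ⟨b0, hb0⟩ := hb0
  have hyx : y = fun k => x k + d k := funext fun k => by simp [hdd]
  have ey : ∀ j, vA n m y j = vA n m x j + (2 * d j - d (j-1) - d (j+1)) := by
    intro j
    have := va_add n hn m x d j
    rw [← hyx] at this
    exact this
  have NOMID : ∀ g : ZMod (n+1) → ℤ, (∀ j, 0 ≤ g j) → (∀ j, g j ≤ d j) →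
      (∃ j, 0 < g j) → (∃ j, g j < d j) → DomA n m (fun k => x k + g k) → False := by
    intro g hg0 hgd he1 he2 hdom
    obtain ⟨j1, hj1⟩ := he1
    obtain ⟨j2, hj2⟩ := he2
    refine hno ⟨fun k => x k + g k, hdom, ?_, ?_⟩
    · refine Pi.lt_def.mpr ⟨fun j => ?_, j1, ?_⟩
      · show x j ≤ x j + g j; linarith [hg0 j]
      · show x j1 < x j1 + g j1; linarith
    · refine Pi.lt_def.mpr ⟨fun j => ?_, j2, ?_⟩
      · show x j + g j ≤ y j
        have := hgd j; simp only [hdd] at this; linarith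
      · show x j2 + g j2 < y j2
        have := hj2; simp only [hdd] at this; linarith
  -- Step 1: the difference is an indicator vector
  obtain ⟨b, -, hbmax⟩ := Finset.exists_max_image Finset.univ d Finset.univ_nonempty
  set M := d b with hMdef
  have hM1 : 1 ≤ M := by
    have h2 := hbmax b0 (Finset.mem_univ _)
    have h4 : 0 < d b0 := by simp only [hdd]; linarith [hb0]
    omega
  set σ : ZMod (n+1) → ℤ := fun j => if d j = M then 1 else 0 with hσ
  have hσ01 : ∀ j, σ j = 0 ∨ σ j = 1 := by
    intro j; simp only [hσ]; split_ifs <;> simp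
  have hg1dom : DomA n m (fun k => x k + (d k - σ k)) := by
    intro j
    have e := va_add n hn m x (fun k => d k - σ k) j
    rw [e]
    have hmax1 := hbmax (j-1) (Finset.mem_univ _)
    have hmax2 := hbmax (j+1) (Finset.mem_univ _)
    have heyj := ey j
    have hxj := hx j
    have hyj := hy j
    by_cases h1 : d j = M
    · have s1 : σ j = 1 := by simp only [hσ]; rw [if_pos h1]
      by_cases h2 : d (j-1) = M <;> by_cases hh3 : d (j+1) = M
      · have s2 : σ (j-1) = 1 := by simp only [hσ]; rw [if_pos h2]
        have s3 : σ (j+1) = 1 := by simp only [hσ]; rw [if_pos hh3]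
        rw [s1, s2, s3]; linarith
      · have s2 : σ (j-1) = 1 := by simp only [hσ]; rw [if_pos h2]
        have s3 : σ (j+1) = 0 := by simp only [hσ]; rw [if_neg hh3]
        have : d (j+1) ≤ M - 1 := by omega
        rw [s1, s2, s3]; linarith
      · have s2 : σ (j-1) = 0 := by simp only [hσ]; rw [if_neg h2]
        have s3 : σ (j+1) = 1 := by simp only [hσ]; rw [if_pos hh3]
        have : d (j-1) ≤ M - 1 := by omega
        rw [s1, s2, s3]; linarith
      · have s2 : σ (j-1) = 0 := by simp only [hσ]; rw [if_neg h2]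
        have s3 : σ (j+1) = 0 := by simp only [hσ]; rw [if_neg hh3]
        have : d (j-1) ≤ M - 1 := by omega
        have : d (j+1) ≤ M - 1 := by omega
        rw [s1, s2, s3]; linarith
    · have s1 : σ j = 0 := by simp only [hσ]; rw [if_neg h1]
      rcases hσ01 (j-1) with s2|s2 <;> rcases hσ01 (j+1) with s3|s3 <;>
        rw [s1, s2, s3] <;> linarith
  have h01d : ∀ j, d j = 0 ∨ d j = 1 := by
    by_contra hc
    push_neg at hc
    have hex : ∃ j, 0 < d j - σ j := by
      obtain ⟨j, hj1, hj2⟩ := hc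
      refine ⟨j, ?_⟩
      have := hd0 j
      have h2 : 0 ≤ σ j ∧ σ j ≤ 1 := by rcases hσ01 j with h|h <;> omega
      omega
    have hσval : ∀ j, (d j = M → σ j = 1) ∧ (d j ≠ M → σ j = 0) := by
      intro j
      constructor <;> intro h <;> simp [hσ, h]
    apply NOMID (fun k => d k - σ k) ?_ ?_ hex ⟨b, ?_⟩ hg1dom
    · intro j
      show 0 ≤ d j - σ j
      by_cases h : d j = M
      · have := (hσval j).1 h
        omega
      · have := (hσval j).2 h
        have := hd0 j; omega
    · intro j
      show d j - σ j ≤ d j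
      rcases hσ01 j with h|h <;> omega
    · show d b - σ b < d b
      have : σ b = 1 := by simp [hσ, ← hMdef]
      omega
  have hdb1 : d b = 1 := by
    have : σ b = 1 := by simp [hσ, ← hMdef]
    by_contra hc
    have hdb0 : d b = 0 := by rcases h01d b with h|h; exact h; exact absurd h hc
    omega
  have hMeq1 : M = 1 := by rw [hMdef]; exact hdb1
  by_cases hall : ∀ j, d j = (1:ℤ)
  · -- case (c) : delta
    right; right
    have hva_le1 : ∀ i, vA n m x i ≤ 1 := by
      intro i; by_contra hc; push_neg at hc
      have hc2 : 2 ≤ vA n m x i := hc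
      have hi1 : i - 1 ≠ i := fun h => zz_one_ne _ h3 (by linear_combination -h)
      have hi2 : i + 1 ≠ i := fun h => zz_one_ne _ h3 (by linear_combination h)
      set g : ZMod (n+1) → ℤ := fun j => if j = i then 0 else 1 with hg
      have hg01 : ∀ j, g j = 0 ∨ g j = 1 := by
        intro j; simp only [hg]; split_ifs <;> simp
      apply NOMID g ?_ ?_ ⟨i + 1, ?_⟩ ⟨i, ?_⟩ ?_
      · intro j; rcases hg01 j with h|h <;> omega
      · intro j; rw [hall j]; rcases hg01 j with h|h <;> omega
      · simp only [hg]; rw [if_neg hi2]; omega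
      · rw [hall i]; simp only [hg, if_pos]; omega
      · intro j
        rw [va_add n hn]
        by_cases hji : j = i
        · subst hji
          have s1 : g j = 0 := by simp [hg]
          have s2 : g (j-1) = 1 := by simp [hg, hi1]
          have s3 : g (j+1) = 1 := by simp [hg, hi2]
          rw [s1, s2, s3]; linarith
        · have s1 : g j = 1 := by simp [hg, hji]
          rcases hg01 (j-1) with s2|s2 <;> rcases hg01 (j+1) with s3|s3 <;>
            rw [s1, s2, s3] <;> linarith [hx j]
    have claim : ∀ i i' : ZMod (n+1), i ≠ i' → 1 ≤ vA n m x i → 1 ≤ vA n m x i' →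
        2 ≤ (i' - i).val → False := by
      intro i i' hne hvi hvi' ht
      have htN : (i' - i).val < n+1 := zz_val_lt _ h3 _
      set t := (i' - i).val with htdef
      have hrepi' : i' = i + (t:ℕ) := zz_rep (n+1) h3 i i'
      set g := indF (n+1) (i+1) (t-1) with hg
      have hii' : (i+1) + ((t-1:ℕ) : ZMod (n+1)) = i' := by
        have e : ((t:ℕ) : ZMod (n+1)) = ((t-1:ℕ) : ZMod (n+1)) + 1 := by
          have e2 : t - 1 + 1 = t := by omega
          calc ((t:ℕ) : ZMod (n+1)) = (((t-1)+1 : ℕ) : ZMod (n+1)) := by rw [e2]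
          _ = ((t-1:ℕ) : ZMod (n+1)) + 1 := by push_cast; ring
        rw [hrepi', e]; ring
      have hgled : ∀ kk, g kk ≤ d kk := by
        intro kk
        rcases indF_01 (n+1) (i+1) (t-1) kk with h|h
        · rw [hg, h]; exact hd0 kk
        · rw [hg, h, hall kk]
      apply NOMID g (fun j => indF_nonneg _ _ _ j) hgled ⟨i+1, ?_⟩ ⟨i, ?_⟩ ?_
      · have := indF_mem (n+1) h3 (i+1) (t-1) 0 (by omega) (by omega)
        rw [show ((i+1) + ((0:ℕ):ZMod (n+1))) = i + 1 by push_cast; ring] at this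
        rw [hg, this]; omega
      · rw [hall i]
        have hieq : i = (i+1) + ((n:ℕ) : ZMod (n+1)) := by
          have : ((n:ℕ) : ZMod (n+1)) = -1 := by
            have := zz_neg_one (n+1) h3
            simpa using this
          rw [this]; ring
        have h0 : indF (n+1) (i+1) (t-1) ((i+1) + ((n:ℕ) : ZMod (n+1))) = 0 :=
          indF_notmem (n+1) h3 (i+1) (t-1) n (by omega) (by omega)
        rw [← hieq] at h0
        rw [hg, h0]; omega
      · apply dom_add01 n hn m x hx g (by rw [hg]; exact indF_01 _ _ _)
        intro j hj0
        rw [hg] at hj0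
        have hplus := indF_plus (n+1) h3 (i+1) (t-1) (by omega) (by omega) j hj0
        have hminus := indF_minus (n+1) h3 (i+1) (t-1) (by omega) (by omega) j hj0
        rw [hii'] at hminus
        rw [show (i+1) - 1 = i from by ring] at hplus
        rw [hg]
        by_cases hji' : j = i'
        · have hjni : j ≠ i := by rw [hji']; exact fun h => hne h.symm
          rw [if_pos hji'] at hminus
          rw [if_neg hjni] at hplus
          rw [hminus, hplus, hji']; linarith
        · rw [if_neg hji'] at hminus
          by_cases hji : j = i
          · rw [if_pos hji] at hplus
            rw [hminus, hplus, hji]; linarith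
          · rw [if_neg hji] at hplus
            rw [hminus, hplus]; linarith [hx j]
    have hone : ¬ ∃ i i' : ZMod (n+1), i ≠ i' ∧ 1 ≤ vA n m x i ∧ 1 ≤ vA n m x i' := by
      rintro ⟨i, i', hne, h1, h2⟩
      have hrep := zz_rep (n+1) h3 i i'
      have htN : (i' - i).val < n+1 := zz_val_lt _ h3 _
      have ht1 : 1 ≤ (i' - i).val := by
        rcases Nat.eq_zero_or_pos (i' - i).val with h|h
        · exfalso; apply hne; rw [hrep, h]; simp
        · omega
      rcases le_or_gt 2 ((i' - i).val) with h|h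
      · exact claim i i' hne h1 h2 h
      · have ht1' : (i' - i).val = 1 := by omega
        apply claim i' i hne.symm h2 h1
        have e1 : i' = i + 1 := by
          rw [hrep, ht1']; push_cast; ring
        have e2 : i - i' = ((n:ℕ) : ZMod (n+1)) := by
          have : ((n:ℕ) : ZMod (n+1)) = -1 := by simpa using zz_neg_one (n+1) h3
          rw [this, e1]; ring
        rw [e2, ZMod.val_natCast_of_lt (by omega)]; omega
    have hsum := sum_va n hn m x
    have hex1 : ∃ i, 1 ≤ vA n m x i := by
      by_contra hc; push_neg at hc
      have : ∑ j, vA n m x j ≤ 0 :=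
        Finset.sum_nonpos (fun j _ => by linarith [hc j])
      linarith
    obtain ⟨i, hi⟩ := hex1
    have hzero : ∀ j, j ≠ i → vA n m x j = 0 := by
      intro j hj
      by_contra hne
      have h1 : 1 ≤ vA n m x j := lt_of_le_of_ne (hx j) (Ne.symm hne)
      exact hone ⟨j, i, hj, h1, hi⟩
    have hvm : vA n m x i = m := by
      have := Finset.sum_eq_single i (fun j _ hj => hzero j hj)
        (fun h => absurd (Finset.mem_univ i) h)
      rw [hsum] at this
      exact this.symm
    have hmeq : m = 1 := le_antisymm (by rw [← hvm]; exact hva_le1 i) hm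
    refine ⟨funext fun j => ?_, i, funext fun j => ?_⟩
    · show y j - x j = 1
      have := hall j; simp only [hdd] at this; exact this
    · show vA n m y j = eA n i j
      have hvy : vA n m y j = vA n m x j := by
        rw [ey j, hall j, hall (j-1), hall (j+1)]; ring
      rw [hvy]
      unfold eA
      by_cases hji : j = i
      · rw [if_pos hji, hji, hvm, hmeq]
      · rw [if_neg hji]; exact hzero j hji
  · -- d is not all ones
    push_neg at hall
    obtain ⟨u, hu⟩ := hall
    have hu0 : d u = 0 := by rcases h01d u with h|h; exact h; exact absurd h hu
    obtain ⟨c, hc0, hc1⟩ := ascent (n+1) h3 d h01d u b hu0 hdb1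
    set a := c + 1 with ha
    have hda : d a = 1 := hc1
    have hda1 : d (a - 1) = 0 := by
      rw [show a - 1 = c from by rw [ha]; ring]; exact hc0
    have hnc : ((n:ℕ) : ZMod (n+1)) = -1 := by simpa using zz_neg_one (n+1) h3
    have hPex : ∃ k, 1 ≤ k ∧ d (a + (k:ℕ)) = 0 := by
      refine ⟨n, by omega, ?_⟩
      rw [hnc, show a + (-1 : ZMod (n+1)) = a - 1 from by ring]
      exact hda1
    set w := Nat.find hPex with hwdef
    have hwspec := Nat.find_spec hPex
    have hw1 : 1 ≤ w := hwspec.1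
    have hww0 : d (a + ((w:ℕ) : ZMod (n+1))) = 0 := hwspec.2
    have hwle : w ≤ n := by
      apply Nat.find_min' hPex
      refine ⟨by omega, ?_⟩
      rw [hnc, show a + (-1 : ZMod (n+1)) = a - 1 from by ring]
      exact hda1
    have hrun : ∀ k, k < w → d (a + (k:ℕ)) = 1 := by
      intro k hk
      rcases Nat.eq_zero_or_pos k with rfl|hk1
      · rw [show a + ((0:ℕ) : ZMod (n+1)) = a from by push_cast; ring]
        exact hda
      · have hmin := Nat.find_min hPex hk
        rcases h01d (a + (k:ℕ)) with h|h
        · exact absurd ⟨hk1, h⟩ hmin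
        · exact h
    have hgled : ∀ kk, indF (n+1) a w kk ≤ d kk := by
      intro kk
      rcases indF_01 (n+1) a w kk with h|h
      · rw [h]; exact hd0 kk
      · rw [h]
        have hlt' := (indF_iff (n+1) a w kk).mp h
        have := hrun _ hlt'
        rw [← zz_rep (n+1) h3 a kk] at this
        omega
    have hinda : indF (n+1) a w a = 1 := by
      rw [indF_iff]; rw [sub_self, ZMod.val_zero]; omega
    have hdomw : DomA n m (fun k => x k + indF (n+1) a w k) := by
      apply dom_add01 n hn m x hx _ (indF_01 _ _ _)
      intro j' hj'
      have hplus := indF_plus (n+1) h3 a w (by omega) (by omega) j' hj'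
      have hminus := indF_minus (n+1) h3 a w (by omega) (by omega) j' hj'
      rcases indF_01 (n+1) a w (j'-1) with q1|q1 <;> rcases indF_01 (n+1) a w (j'+1) with q2|q2
      · rw [q1, q2]; linarith [hx j']
      · -- j' = a - 1
        rw [q2] at hplus
        have hj'eq : j' = a - 1 := by
          by_contra hcc; rw [if_neg hcc] at hplus; omega
        have hdj' : d j' = 0 := by rw [hj'eq]; exact hda1
        have := ey j'
        have := hy j'
        have := hgled (j'-1)
        have := hgled (j'+1)
        linarith
      · rw [q1] at hminus
        have hj'eq : j' = a + ((w:ℕ) : ZMod (n+1)) := by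
          by_contra hcc; rw [if_neg hcc] at hminus; omega
        have hdj' : d j' = 0 := by rw [hj'eq]; exact hww0
        have := ey j'
        have := hy j'
        have := hgled (j'-1)
        have := hgled (j'+1)
        linarith
      · rw [q2] at hplus
        have hj'eq : j' = a - 1 := by
          by_contra hcc; rw [if_neg hcc] at hplus; omega
        have hdj' : d j' = 0 := by rw [hj'eq]; exact hda1
        have := ey j'
        have := hy j'
        have := hgled (j'-1)
        have := hgled (j'+1)
        linarith
    have hdind : ∀ j, d j = indF (n+1) a w j := by
      intro j
      by_cases hc : (j - a).val < w
      · rw [(indF_iff (n+1) a w j).mpr hc]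
        have := hrun _ hc
        rw [← zz_rep (n+1) h3 a j] at this
        exact this
      · have hind0 : indF (n+1) a w j = 0 := by
          unfold indF; rw [if_neg hc]
        rw [hind0]
        by_contra hne0
        have hdj1 : d j = 1 := by
          rcases h01d j with h|h; exact absurd h hne0; exact h
        apply NOMID (indF (n+1) a w) (fun k => indF_nonneg _ _ _ k) hgled
          ⟨a, by rw [hinda]; omega⟩ ⟨j, by rw [hind0, hdj1]; omega⟩ hdomw
    rcases eq_or_lt_of_le hw1 with hweq1 | hwge2
    · -- w = 1 : simple root
      left
      refine ⟨a, funext fun j => ?_⟩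
      show y j - x j = eA n a j
      have hdj : y j - x j = d j := by simp only [hdd]
      rw [hdj, hdind j]
      unfold indF eA
      rw [← hweq1]
      by_cases hja : j = a
      · rw [if_pos hja, if_pos]
        rw [hja, sub_self, ZMod.val_zero]; omega
      · rw [if_neg hja, if_neg]
        intro hcc
        apply hja
        have : (j - a).val = 0 := by omega
        have : j - a = 0 := by
          rwa [ZMod.val_eq_zero] at this
        have := sub_eq_zero.mp this
        exact this
    · -- w ≥ 2 : arc
      right; left
      set K : Set (ZMod (n+1)) := {j | (j - a).val < w} with hKK
      have haK : a ∈ K := by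
        show (a - a).val < w
        rw [sub_self, ZMod.val_zero]; omega
      have ha1K : a + 1 ∈ K := by
        show (a + 1 - a).val < w
        haveI : Fact (1 < n + 1) := ⟨by omega⟩
        rw [show a + 1 - a = 1 from by ring, ZMod.val_one]; omega
      have hanotuniv : K ≠ Set.univ := by
        intro hcc
        have : a - 1 ∈ K := by rw [hcc]; exact Set.mem_univ _
        have : (a - 1 - a).val < w := this
        rw [show a - 1 - a = -1 from by ring, ← hnc,
          ZMod.val_natCast_of_lt (by omega)] at this
        omega
      have hane : a ≠ a + 1 := fun h => zz_one_ne _ h3 (by linear_combination -h)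
      refine ⟨K, ⟨⟨a, haK⟩, hanotuniv, arc_conn n hn a w (by omega) hwle⟩,
        ⟨a, haK, a+1, ha1K, hane⟩, funext fun j => ?_, ?_⟩
      · show y j - x j = chi n K j
        have hdj : y j - x j = d j := by simp only [hdd]
        rw [hdj, hdind j, chi, Set.indicator_apply]
        simp only [hKK, Set.mem_setOf_eq, Pi.one_apply]
        unfold indF
        rfl
      · intro j hjK
        have hjval : (j - a).val < w := hjK
        by_contra hne
        have hge1 : 1 ≤ vA n m x j := lt_of_le_of_ne (hx j) (Ne.symm hne)
        have hjna1 : j ≠ a - 1 := by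
          intro hcc
          rw [hcc, show a - 1 - a = -1 from by ring, ← hnc,
            ZMod.val_natCast_of_lt (by omega)] at hjval
          omega
        rcases Nat.eq_zero_or_pos ((j - a).val) with hp0 | hp1
        · -- j = a
          have hjeqa : j = a := by
            have : j - a = 0 := by rwa [ZMod.val_eq_zero] at hp0
            exact sub_eq_zero.mp this
          set g := indF (n+1) (a+1) (w-1) with hg
          have hcast : (a+1) + ((w-1:ℕ) : ZMod (n+1)) = a + ((w:ℕ) : ZMod (n+1)) := by
            have e2 : w - 1 + 1 = w := by omega
            have e : ((w:ℕ) : ZMod (n+1)) = ((w-1:ℕ) : ZMod (n+1)) + 1 := by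
              calc ((w:ℕ) : ZMod (n+1)) = (((w-1)+1 : ℕ) : ZMod (n+1)) := by rw [e2]
              _ = ((w-1:ℕ) : ZMod (n+1)) + 1 := by push_cast; ring
            rw [e]; ring
          have hawa : a + ((w:ℕ) : ZMod (n+1)) ≠ a := by
            intro hcc
            have : ((w:ℕ) : ZMod (n+1)) = ((0:ℕ) : ZMod (n+1)) := by
              push_cast
              linear_combination hcc
            have := zz_cast_inj (n+1) w 0 (by omega) (by omega) this
            omega
          have hgled2 : ∀ kk, g kk ≤ d kk := by
            intro kk
            rcases indF_01 (n+1) (a+1) (w-1) kk with h|h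
            · rw [hg, h]; exact hd0 kk
            · rw [hg, h]
              have hlt' := (indF_iff (n+1) (a+1) (w-1) kk).mp h
              set sv := (kk - (a+1)).val with hsv
              have hrep := zz_rep (n+1) h3 (a+1) kk
              rw [← hsv] at hrep
              have e : kk = a + ((sv + 1 : ℕ) : ZMod (n+1)) := by
                rw [hrep]; push_cast; ring
              have := hrun (sv + 1) (by omega)
              rw [← e] at this
              omega
          apply NOMID g (fun k => indF_nonneg _ _ _ k) hgled2 ⟨a+1, ?_⟩ ⟨a, ?_⟩ ?_
          · have : g (a+1) = 1 := by
              rw [hg, indF_iff, sub_self, ZMod.val_zero]; omega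
            omega
          · have : g a = 0 := by
              rw [hg]
              unfold indF
              rw [if_neg]
              rw [show a - (a+1) = -1 from by ring, ← hnc,
                ZMod.val_natCast_of_lt (by omega)]
              omega
            rw [this, hda]; omega
          · apply dom_add01 n hn m x hx _ (by rw [hg]; exact indF_01 _ _ _)
            intro j' hj'
            rw [hg] at hj' ⊢
            have hplus := indF_plus (n+1) h3 (a+1) (w-1) (by omega) (by omega) j' hj'
            have hminus := indF_minus (n+1) h3 (a+1) (w-1) (by omega) (by omega) j' hj'
            rw [hcast] at hminus
            rw [show (a+1) - 1 = a from by ring] at hplus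
            by_cases e2 : j' = a
            · rw [if_pos e2] at hplus
              rw [if_neg (by rw [e2]; exact fun h => hawa h.symm)] at hminus
              rw [hminus, hplus, e2, ← hjeqa]
              linarith
            · rw [if_neg e2] at hplus
              by_cases e1 : j' = a + ((w:ℕ) : ZMod (n+1))
              · rw [if_pos e1] at hminus
                have hdj' : d j' = 0 := by rw [e1]; exact hww0
                have := ey j'
                have := hy j'
                have := hgled2 (j'-1)
                have := hgled2 (j'+1)
                linarith
              · rw [if_neg e1] at hminus
                rw [hminus, hplus]
                linarith [hx j']
        · -- j = a + p, 1 ≤ p < w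
          set g := indF (n+1) a ((j - a).val) with hg
          have hjrep : j = a + (((j - a).val : ℕ) : ZMod (n+1)) := zz_rep (n+1) h3 a j
          have hgled2 : ∀ kk, g kk ≤ d kk := by
            intro kk
            have := indF_mono (n+1) a ((j-a).val) w (by omega) kk
            have := hgled kk
            rw [hg]; linarith
          apply NOMID g (fun k => indF_nonneg _ _ _ k) hgled2 ⟨a, ?_⟩ ⟨j, ?_⟩ ?_
          · have : g a = 1 := by
              rw [hg, indF_iff, sub_self, ZMod.val_zero]; omega
            omega
          · have : g j = 0 := by
              rw [hg]; unfold indF; rw [if_neg]; omega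
            rw [this, hdind j, (indF_iff (n+1) a w j).mpr hjval]; omega
          · apply dom_add01 n hn m x hx _ (by rw [hg]; exact indF_01 _ _ _)
            intro j' hj'
            rw [hg] at hj' ⊢
            have hplus := indF_plus (n+1) h3 a ((j-a).val) (by omega) (by omega) j' hj'
            have hminus := indF_minus (n+1) h3 a ((j-a).val) (by omega) (by omega) j' hj'
            rw [← hjrep] at hminus
            by_cases e2 : j' = j
            · rw [if_pos e2] at hminus
              rw [if_neg (by rw [e2]; exact hjna1)] at hplus
              rw [hminus, hplus, e2]
              linarith
            · rw [if_neg e2] at hminus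
              by_cases e1 : j' = a - 1
              · rw [if_pos e1] at hplus
                have hdj' : d j' = 0 := by rw [e1]; exact hda1
                have := ey j'
                have := hy j'
                have := hgled2 (j'-1)
                have := hgled2 (j'+1)
                linarith
              · rw [if_neg e1] at hplus
                rw [hminus, hplus]
                linarith [hx j']

lemma bwdlem (n : ℕ) (hn : 2 ≤ n) (m : ℤ) (hm : 1 ≤ m)
    (x y : ZMod (n + 1) → ℤ) (hx : DomA n m x) (hy : DomA n m y) (hlt : x < y)
    (h : (∃ i, y - x = eA n i) ∨
      (∃ K, IsArc n K ∧ K.Nontrivial ∧ y - x = chi n K ∧ ∀ j ∈ K, vA n m x j = 0) ∨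
      ((y - x = fun _ => 1) ∧ ∃ i, vA n m y = eA n i)) :
    CoversA n m x y := by
  classical
  have h3 : 3 ≤ n + 1 := by omega
  refine ⟨hx, hy, hlt, ?_⟩
  rintro ⟨z, hz, hxz, hzy⟩
  have hle1 : ∀ j, x j ≤ z j := fun j => (Pi.le_def.mp hxz.le) j
  have hle2 : ∀ j, z j ≤ y j := fun j => (Pi.le_def.mp hzy.le) j
  rcases h with ⟨i, hi⟩ | ⟨K, hK, hKnt, hKd, hKv⟩ | ⟨hd, i, hvy⟩
  · -- simple root
    have hij : ∀ j, y j - x j = if j = i then 1 else 0 := by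
      intro j; have := congrFun hi j; simpa [eA] using this
    by_cases hzi : z i = x i
    · refine hxz.ne (funext fun j => ?_).symm
      by_cases hji : j = i
      · rw [hji, hzi]
      · have := hij j; rw [if_neg hji] at this
        have := hle1 j; have := hle2 j; omega
    · refine hzy.ne (funext fun j => ?_)
      by_cases hji : j = i
      · subst hji
        have := hij j; rw [if_pos rfl] at this
        have := hle1 j; have := hle2 j; omega
      · have := hij j; rw [if_neg hji] at this
        have := hle1 j; have := hle2 j; omega
  · -- arc
    have hd : ∀ j, y j - x j = if j ∈ K then 1 else 0 := by
      intro j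
      have := congrFun hKd j
      rwa [chi, Set.indicator_apply] at this
    set S : Set (ZMod (n+1)) := {j | z j = x j + 1} with hS
    obtain ⟨-, ha⟩ := Pi.lt_def.mp hxz
    obtain ⟨a, ha⟩ := ha
    have haK : a ∈ K := by
      by_contra hc
      have := hd a; rw [if_neg hc] at this
      have := hle2 a; omega
    have haS : a ∈ S := by
      have := hd a; rw [if_pos haK] at this
      have := hle2 a
      simp only [hS, Set.mem_setOf_eq]; omega
    obtain ⟨-, hb⟩ := Pi.lt_def.mp hzy
    obtain ⟨b, hb⟩ := hb
    have hbK : b ∈ K := by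
      by_contra hc
      have := hd b; rw [if_neg hc] at this
      have := hle1 b; omega
    have hbS : b ∉ S := by
      have := hd b
      rw [if_pos hbK] at this
      simp only [hS, Set.mem_setOf_eq]; omega
    obtain ⟨u, v, huK, huS, hvK, hvS, hadj⟩ :=
      crossing n K hK.2.2 S a haK haS b hbK hbS
    have hzu : z u = x u := by
      have := hd u; rw [if_pos huK] at this
      have h2 := hle2 u; have h1 := hle1 u
      simp only [hS, Set.mem_setOf_eq] at huS; omega
    have hzv : z v = x v + 1 := hvS
    have hvxu : vA n m x u = 0 := hKv u huK
    have e1 := va_eq n hn m x u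
    have e2 := va_eq n hn m z u
    have hdom := hz u
    rcases (cyc_adj n u v).mp hadj with ⟨hne, hor | hor⟩
    · subst hor
      have := hle1 (u - 1)
      linarith
    · have huv : u - 1 = v := by rw [hor]; ring
      rw [huv] at e1 e2
      have := hle1 (u + 1)
      linarith
  · -- delta
    have hd1 : ∀ j, y j = x j + 1 := by
      intro j; have := congrFun hd j; simp at this; omega
    have hvyj : ∀ j, vA n m y j = if j = i then 1 else 0 := by
      intro j; have := congrFun hvy j; simpa [eA] using this
    have hvx : ∀ j, vA n m x j = if j = i then 1 else 0 := by
      intro j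
      have e1 := va_eq n hn m x j
      have e2 := va_eq n hn m y j
      rw [hd1 j, hd1 (j-1), hd1 (j+1)] at e2
      rw [← hvyj j]; linarith
    set w : ZMod (n+1) → ℤ := fun j => z j - x j with hw
    have h01 : ∀ j, w j = 0 ∨ w j = 1 := by
      intro j
      have := hle1 j; have := hle2 j; have := hd1 j
      simp only [hw]; omega
    obtain ⟨-, ha⟩ := Pi.lt_def.mp hxz
    obtain ⟨a, ha⟩ := ha
    have hwa : w a = 1 := by have := hle2 a; have := hd1 a; simp only [hw]; omega
    obtain ⟨-, hb⟩ := Pi.lt_def.mp hzy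
    obtain ⟨b, hb⟩ := hb
    have hwb : w b = 0 := by have := hle1 b; have := hd1 b; simp only [hw]; omega
    obtain ⟨c, hc1, hc0⟩ := descent (n+1) h3 w h01 b a hwb hwa
    obtain ⟨c', hc'0, hc'1⟩ := ascent (n+1) h3 w h01 b a hwb hwa
    have hvz : ∀ j, vA n m z j = vA n m x j + (2 * w j - w (j-1) - w (j+1)) := by
      intro j
      have e1 := va_eq n hn m x j
      have e2 := va_eq n hn m z j
      have q1 : z j = x j + w j := by simp [hw]
      have q2 : z (j-1) = x (j-1) + w (j-1) := by simp [hw]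
      have q3 : z (j+1) = x (j+1) + w (j+1) := by simp [hw]
      rw [q1, q2, q3] at e2
      linarith
    have hj1 : c + 1 = i ∧ w (c + 1 + 1) = 0 := by
      have := hvz (c + 1)
      have hzz := hz (c + 1)
      have hx1 := hvx (c + 1)
      have hcc : c + 1 - 1 = c := by ring
      rw [hcc] at this
      have h01' := h01 (c + 1 + 1)
      by_cases hcase : c + 1 = i
      · rw [if_pos hcase] at hx1
        constructor
        · exact hcase
        · omega
      · rw [if_neg hcase] at hx1
        omega
    have hj2 : c' = i := by
      have := hvz c'
      have hzz := hz c'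
      have hx1 := hvx c'
      have h01' := h01 (c' - 1)
      by_cases hcase : c' = i
      · exact hcase
      · rw [if_neg hcase] at hx1
        omega
    rw [hj1.1] at hc0
    rw [hj2] at hc'1
    have := hj1.1
    have := hj1.2
    rw [hj1.1] at this
    omega

/-- Theorem 3.8 in type `A_n^{(1)}`: for dominant `x < y`, `y` covers
`x` iff (a) `y - x` is a simple root `eᵢ`; (b) `y - x = χ_K` for an arc `K` with at
least two elements and `v(x)` vanishes on `K`; or (c) `y - x = 𝟙` and `v(y) = eᵢ`
for some `i`. -/
theorem stmt_12 (n : ℕ) (hn : 2 ≤ n) (m : ℤ) (hm : 1 ≤ m)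
    (x y : ZMod (n + 1) → ℤ) (hx : DomA n m x) (hy : DomA n m y) (hlt : x < y) :
    CoversA n m x y ↔
      (∃ i, y - x = eA n i) ∨
      (∃ K, IsArc n K ∧ K.Nontrivial ∧ y - x = chi n K ∧ ∀ j ∈ K, vA n m x j = 0) ∨
      ((y - x = fun _ => 1) ∧ ∃ i, vA n m y = eA n i) := by
  exact ⟨fwdlem n hn m hm x y hx hy hlt, bwdlem n hn m hm x y hx hy hlt⟩
end
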